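/- arXiv:1605.00384 — 5 statements merged into one kernel-verified Lean document; each statement's English description precedes it below -/
import Mathlib

section
/- Let F ∈ ℂ[x_0,…,x_m] be a nonzero homogeneous form of degree d such that a linear differential operator ℓ = c_0X_0 + ⋯ + c_mX_m satisfies ℓ∘F = 0 if and only if c_0 = ⋯ = c_n = 0 (i.e., the degree-one part of the apolar ideal F^⊥ is spanned by X_{n+1},…,X_m). If F = L_1^d + ⋯ + L_r^d with r = rk(F) and L_i linear forms in ℂ[x_0,…,x_m], then every L_i lies in ℂ[x_0,…,x_n]; that is, the coefficient of x_j in L_i is zero for every i = 1,…,r and every j = n+1,…,m. -/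
open MvPolynomial

noncomputable section

/-- The linear form `c₀x₀ + ⋯ + cₙxₙ` with coefficient vector `c`. -/
def lin {σ : Type*} [Fintype σ] (c : σ → ℂ) : MvPolynomial σ ℂ :=
  ∑ i, C (c i) * X i

/-- `F` admits a Waring decomposition `F = L₁^d + ⋯ + L_r^d`. -/
def HasWaringDecomp {σ : Type*} [Fintype σ] (d : ℕ) (F : MvPolynomial σ ℂ) (r : ℕ) : Prop :=
  ∃ L : Fin r → σ → ℂ, F = ∑ j, lin (L j) ^ d

/-- The Waring rank of `F` (as a form of degree `d`). -/
def waringRank {σ : Type*} [Fintype σ] (d : ℕ) (F : MvPolynomial σ ℂ) : ℕ :=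
  sInf {r | HasWaringDecomp d F r}

lemma my_coeff_pderiv {σ : Type*} [DecidableEq σ] (i : σ) (f : MvPolynomial σ ℂ) (u : σ →₀ ℕ) :
    coeff u (pderiv i f) = ((u i : ℂ) + 1) * coeff (u + Finsupp.single i 1) f := by
  have h1 : pderiv i f = ∑ v ∈ f.support, monomial (v - Finsupp.single i 1) (coeff v f * v i) := by
    conv_lhs => rw [f.as_sum]
    rw [map_sum]
    exact Finset.sum_congr rfl fun v _ => pderiv_monomial
  have hcan : (u + Finsupp.single i 1) - Finsupp.single i 1 = u := by
    ext k; simp [Finsupp.sub_apply]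
  rw [h1, coeff_sum]
  simp only [coeff_monomial]
  rw [Finset.sum_eq_single (u + Finsupp.single i 1)]
  · rw [if_pos hcan, Finsupp.add_apply, Finsupp.single_eq_same]
    push_cast
    ring
  · intro v hv hne
    split_ifs with h
    · have hvi : v i = 0 := by
        by_contra hvi
        refine hne ?_
        have hle : Finsupp.single i 1 ≤ v := Finsupp.single_le_iff.mpr (by omega)
        rw [← h]
        exact (tsub_add_cancel_of_le hle).symm
      simp [hvi]
    · rfl
  · intro h
    rw [if_pos hcan, MvPolynomial.notMem_support_iff.mp h]
    simp

lemma support_of_pderiv_zero {σ : Type*} [DecidableEq σ] {i : σ} {f : MvPolynomial σ ℂ}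
    (h : pderiv i f = 0) (u : σ →₀ ℕ) (hu : u ∈ f.support) : u i = 0 := by
  by_contra hui
  have hle : Finsupp.single i 1 ≤ u := Finsupp.single_le_iff.mpr (by omega)
  have hc := my_coeff_pderiv i f (u - Finsupp.single i 1)
  rw [h, tsub_add_cancel_of_le hle] at hc
  have hcoeff : coeff u f ≠ 0 := MvPolynomial.mem_support_iff.mp hu
  simp only [coeff_zero] at hc
  rcases mul_eq_zero.mp hc.symm with h' | h'
  · norm_cast at h'
  · exact hcoeff h'

lemma aeval_fix {σ : Type*} [Fintype σ] [DecidableEq σ] (F : MvPolynomial σ ℂ)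
    (g : σ → MvPolynomial σ ℂ)
    (h : ∀ u ∈ F.support, ∀ i, g i ≠ X i → u i = 0) : aeval g F = F := by
  conv_rhs => rw [F.as_sum]
  conv_lhs => rw [F.as_sum]
  rw [map_sum]
  refine Finset.sum_congr rfl fun u hu => ?_
  rw [aeval_monomial, monomial_eq]
  congr 1
  refine Finsupp.prod_congr fun i hi => ?_
  by_cases hgi : g i = X i
  · rw [hgi]
  · exact absurd (Finsupp.mem_support_iff.mp hi) (by simp [h u hu i hgi])

lemma lin_zero {σ : Type*} [Fintype σ] : lin (0 : σ → ℂ) = 0 := by simp [lin]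

lemma hasWaring_drop {σ : Type*} [Fintype σ] {d r : ℕ} {F : MvPolynomial σ ℂ}
    (N : Fin r → σ → ℂ) (j0 : Fin r) (h0 : N j0 = 0) (hd : d ≠ 0)
    (hF : F = ∑ j, lin (N j) ^ d) :
    ∃ M : Fin (r - 1) → σ → ℂ, F = ∑ j, lin (M j) ^ d := by
  cases r with
  | zero => exact j0.elim0
  | succ s =>
    refine ⟨fun j => N (j0.succAbove j), ?_⟩
    rw [hF, Fin.sum_univ_succAbove _ j0, h0, lin_zero, zero_pow hd, zero_add]
    rfl

/-- if the degree-one part of the apolar ideal of `F` is spanned by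
`X_{n+1}, …, X_m` (i.e. `ℓ ∘ F = 0` iff the first `n+1` coefficients of `ℓ` vanish),
then every linear form in a minimal Waring decomposition of `F` lies in
`ℂ[x_0, …, x_n]`. -/
theorem waring_minimal_decomposition_essential_variables
    {m n : ℕ} (hnm : n ≤ m) (d : ℕ) (F : MvPolynomial (Fin (m + 1)) ℂ)
    (hF : F ≠ 0) (hhom : F.IsHomogeneous d)
    (hperp : ∀ c : Fin (m + 1) → ℂ,
      (∑ i, c i • pderiv i F) = 0 ↔ ∀ i : Fin (m + 1), (i : ℕ) ≤ n → c i = 0)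
    (L : Fin (waringRank d F) → Fin (m + 1) → ℂ)
    (hdec : F = ∑ j, lin (L j) ^ d) :
    ∀ (j : Fin (waringRank d F)) (i : Fin (m + 1)), n < (i : ℕ) → L j i = 0 := by
  intro j0 i0 hi0
  by_contra ha
  have hpd : ∀ i : Fin (m + 1), n < (i : ℕ) → pderiv i F = 0 := by
    intro i hi
    have h := (hperp (fun k => if k = i then 1 else 0)).mpr ?_
    · simpa [ite_smul] using h
    · intro k hk
      have hki : k ≠ i := fun h => by subst h; omega
      simp [hki]
  have hd : d ≠ 0 := by
    intro hd0
    subst hd0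
    have hz : ∀ i : Fin (m + 1), pderiv i F = 0 := by
      intro i; rw [hdec]; simp
    have h1 := (hperp (fun _ => 1)).mp (by simp [hz]) 0 (by simp)
    exact one_ne_zero h1
  have hsupp : ∀ u ∈ F.support, ∀ i : Fin (m + 1), n < (i : ℕ) → u i = 0 := fun u hu i hi =>
    support_of_pderiv_zero (hpd i hi) u hu
  set a := L j0 i0 with haa
  set c' : Fin (m + 1) → ℂ := fun k => if (k : ℕ) ≤ n then -(a⁻¹ * L j0 k) else 0 with hc'
  set g : Fin (m + 1) → MvPolynomial (Fin (m + 1)) ℂ :=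
    fun i => if (i : ℕ) ≤ n then X i else if i = i0 then lin c' else 0 with hg
  set M : (Fin (m + 1) → ℂ) → (Fin (m + 1) → ℂ) :=
    fun v k => (if (k : ℕ) ≤ n then v k else 0) + v i0 * c' k with hM
  have hi0n : ¬ ((i0 : ℕ) ≤ n) := by omega
  have hA : ∀ v : Fin (m + 1) → ℂ, aeval g (lin v) = lin (M v) := by
    intro v
    have l1 : aeval g (lin v) = ∑ i, C (v i) * g i := by
      rw [lin, map_sum]
      exact Finset.sum_congr rfl fun i _ => by simp [algebraMap_eq]
    rw [l1]
    have l2 : ∀ i : Fin (m + 1), C (v i) * g i =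
        (if (i : ℕ) ≤ n then C (v i) * X i else 0) + (if i = i0 then C (v i) * lin c' else 0) := by
      intro i
      by_cases hi : (i : ℕ) ≤ n
      · have hne : i ≠ i0 := fun h => hi0n (h ▸ hi)
        simp [hg, hi, hne]
      · by_cases hii : i = i0
        · simp [hg, hi, hii, hi0n]
        · simp [hg, hi, hii]
    rw [Finset.sum_congr rfl (fun i _ => l2 i), Finset.sum_add_distrib,
      Finset.sum_ite_eq' Finset.univ i0 (fun i => C (v i) * lin c')]
    simp only [Finset.mem_univ, if_true]
    have l3 : ∀ k : Fin (m + 1), C (M v k) * X k =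
        (if (k : ℕ) ≤ n then C (v k) * X k else 0) + C (v i0) * (C (c' k) * X k) := by
      intro k
      by_cases hk : (k : ℕ) ≤ n <;> simp [hM, hk] <;> ring
    conv_rhs => rw [lin, Finset.sum_congr rfl (fun k _ => l3 k), Finset.sum_add_distrib,
      ← Finset.mul_sum, ← lin]
  have hB : M (L j0) = 0 := by
    funext k
    by_cases hk : (k : ℕ) ≤ n
    · have : L j0 k + a * -(a⁻¹ * L j0 k) = 0 := by field_simp; ring
      simpa [hM, hc', hk] using this
    · simp [hM, hc', hk]
  have hfix : aeval g F = F := by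
    refine aeval_fix F g ?_
    intro u hu i hgi
    by_cases hi : (i : ℕ) ≤ n
    · exact absurd (by simp [hg, hi]) hgi
    · exact hsupp u hu i (by omega)
  have hdec2 : F = ∑ j, lin (M (L j)) ^ d := by
    conv_lhs => rw [← hfix, hdec]
    rw [map_sum]
    exact Finset.sum_congr rfl fun j _ => by rw [map_pow, hA]
  obtain ⟨Mdec, hMdec⟩ := hasWaring_drop (fun j => M (L j)) j0 hB hd hdec2
  have hle : waringRank d F ≤ waringRank d F - 1 := Nat.sInf_le ⟨Mdec, hMdec⟩
  have hpos : waringRank d F ≠ 0 := fun h => (h ▸ j0).elim0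
  omega

end
end

section
/- Let Q = x_0^2 + ⋯ + x_n^2 ∈ ℂ[x_0,…,x_n], which has Waring rank n+1. For a nonzero vector (a_0,…,a_n) ∈ ℂ^{n+1}, the linear form L = a_0x_0 + ⋯ + a_nx_n lies in the Waring locus W_Q (i.e., appears in some minimal Waring decomposition of Q) if and only if a_0^2 + ⋯ + a_n^2 ≠ 0. Equivalently, the forbidden locus F_Q equals the quadric V(X_0^2 + ⋯ + X_n^2) ⊂ ℙ^n. -/
/-!
Evaluating at points and polarizing, `∑ xᵢ² = ∑ⱼ cⱼ Lⱼ²` says exactly that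
`Lᵀ * diagonal c * L = 1` for the matrix `L` with rows `Lⱼ`. Comparing ranks, this forces at
least `n + 1` rows, so the rank is `n + 1`. In a decomposition with `n + 1` rows `L` is square,
hence `L * Lᵀ = (diagonal c)⁻¹`, so every row satisfies `(Lⱼ ⬝ᵥ Lⱼ) * cⱼ = 1` and is
non-isotropic. Conversely, if `t² = a ⬝ᵥ a ≠ 0`, then `a / t` is a row of the Householder
reflection exchanging `a` and `t • eᵢ`; this is an orthogonal matrix, and rescaling that row by
`t` gives a decomposition containing `a`.
-/

open MvPolynomial

noncomputable section

/-- The linear form with coefficient vector `a` lies in the Waring locus of `F`: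
there are linear forms `L₂, …, L_r` with `r = rk F` such that `F` lies in the
`ℂ`-linear span of `L^d, L₂^d, …, L_r^d`. -/
def InWaringLocus {σ : Type*} [Fintype σ] (d : ℕ) (F : MvPolynomial σ ℂ) (a : σ → ℂ) : Prop :=
  ∃ (c : Fin (waringRank d F) → ℂ) (L : Fin (waringRank d F) → σ → ℂ)
    (j₀ : Fin (waringRank d F)), L j₀ = a ∧ F = ∑ j, c j • lin (L j) ^ d

open Matrix

theorem Matrix.isSymm_transpose_mul_diagonal_mul {R ι σ : Type*} [CommSemiring R] [Fintype ι]
    [DecidableEq ι] (c : ι → R) (L : Matrix ι σ R) : (Lᵀ * diagonal c * L).IsSymm := by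
  simp [IsSymm, transpose_mul, Matrix.mul_assoc]

section LinearAlgebra

variable {K n : Type*} [Field K] [Fintype n] [DecidableEq n]

theorem Matrix.IsSymm.eq_of_dotProduct_mulVec_self_eq [NeZero (2 : K)] {M N : Matrix n n K}
    (hM : M.IsSymm) (hN : N.IsSymm) (h : ∀ x, x ⬝ᵥ M *ᵥ x = x ⬝ᵥ N *ᵥ x) : M = N := by
  have polar : ∀ {A : Matrix n n K}, A.IsSymm → ∀ i j,
      A i j = ((Pi.single i 1 + Pi.single j 1) ⬝ᵥ A *ᵥ (Pi.single i 1 + Pi.single j 1)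
        - Pi.single i 1 ⬝ᵥ A *ᵥ Pi.single i 1 - Pi.single j 1 ⬝ᵥ A *ᵥ Pi.single j 1) / 2 := by
    intro A hA i j
    have hji : A j i = A i j := by simpa using congrFun (congrFun hA i) j
    simp only [dotProduct_add, add_dotProduct, mulVec_add, single_dotProduct, mulVec_single_one,
      col_apply, one_mul, hji]
    field_simp
    ring
  ext i j
  rw [polar hM, polar hN, h, h, h]

theorem Matrix.card_le_of_transpose_mul_diagonal_mul_eq_one {ι : Type*} [Fintype ι]
    [DecidableEq ι] {c : ι → K} {L : Matrix ι n K} (h : Lᵀ * diagonal c * L = 1) :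
    Fintype.card n ≤ Fintype.card ι :=
  calc Fintype.card n = (Lᵀ * diagonal c * L).rank := by rw [h, rank_one]
    _ ≤ L.rank := rank_mul_le_right _ _
    _ ≤ Fintype.card ι := rank_le_card_height L

theorem Matrix.dotProduct_self_mul_eq_one_of_transpose_mul_diagonal_mul_eq_one {c : n → K}
    {L : Matrix n n K} (h : Lᵀ * diagonal c * L = 1) (j : n) : (L j ⬝ᵥ L j) * c j = 1 := by
  have h' : L * Lᵀ * diagonal c = 1 := by
    rw [Matrix.mul_assoc, mul_eq_one_comm, h]
  have := congrFun (congrFun h' j) j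
  rwa [mul_diagonal, one_apply_eq] at this

theorem Matrix.transpose_mul_diagonal_mul_eq_one_of_orthogonal {H : Matrix n n K}
    (hH : Hᵀ * H = 1) {s : n → K} (hs : ∀ j, s j ≠ 0) :
    (diagonal s * H)ᵀ * diagonal (fun j => (s j ^ 2)⁻¹) * (diagonal s * H) = 1 := by
  have hs2 : diagonal s * diagonal (fun j => (s j ^ 2)⁻¹) * diagonal s = 1 := by
    rw [diagonal_mul_diagonal, diagonal_mul_diagonal, ← diagonal_one]
    congr 1
    funext j
    field_simp [hs j]
  calc (diagonal s * H)ᵀ * diagonal (fun j => (s j ^ 2)⁻¹) * (diagonal s * H)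
      = Hᵀ * (diagonal s * diagonal (fun j => (s j ^ 2)⁻¹) * diagonal s) * H := by
        simp only [transpose_mul, diagonal_transpose, Matrix.mul_assoc]
    _ = 1 := by rw [hs2, Matrix.mul_one, hH]

def householder (v : n → K) : Matrix n n K :=
  1 - (2 / (v ⬝ᵥ v)) • vecMulVec v v

theorem householder_transpose (v : n → K) : (householder v)ᵀ = householder v := by
  simp [householder, transpose_vecMulVec]

theorem householder_mul_self {v : n → K} (hv : v ⬝ᵥ v ≠ 0) :
    householder v * householder v = 1 := by
  have hP : vecMulVec v v * vecMulVec v v = (v ⬝ᵥ v) • vecMulVec v v := by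
    rw [vecMulVec_mul_vecMulVec, vecMulVec_smul]
  have hcoeff : 2 / (v ⬝ᵥ v) * (2 / (v ⬝ᵥ v) * (v ⬝ᵥ v)) = 2 / (v ⬝ᵥ v) + 2 / (v ⬝ᵥ v) := by
    field_simp
    ring
  simp only [householder, sub_mul, mul_sub, Matrix.one_mul, Matrix.mul_one, Matrix.smul_mul,
    Matrix.mul_smul, hP, smul_smul, hcoeff, add_smul]
  abel

theorem sub_single_dotProduct_self {a : n → K} {t : K} (i : n) (ht : t * t = a ⬝ᵥ a) :
    (a - Pi.single i t) ⬝ᵥ (a - Pi.single i t) = 2 * t * (t - a i) := by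
  simp only [sub_dotProduct, dotProduct_sub, single_dotProduct, dotProduct_single, ← ht,
    Pi.sub_apply, Pi.single_eq_same]
  ring

theorem householder_sub_single_row [NeZero (2 : K)] {a : n → K} {t : K} (i : n)
    (ht : t * t = a ⬝ᵥ a) (ht0 : t ≠ 0) (hti : t ≠ a i) :
    householder (a - Pi.single i t) i = t⁻¹ • a := by
  have hsub : t - a i ≠ 0 := sub_ne_zero.mpr hti
  funext j
  rw [householder, sub_single_dotProduct_self i ht, Matrix.sub_apply, Matrix.smul_apply,
    vecMulVec_apply]
  by_cases hj : j = i
  · subst hj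
    simp only [one_apply_eq, Pi.sub_apply, Pi.single_eq_same, Pi.smul_apply, smul_eq_mul]
    field_simp
    ring
  · simp only [one_apply_ne (Ne.symm hj), Pi.sub_apply, Pi.single_eq_same, Pi.single_eq_of_ne hj,
      sub_zero, zero_sub, Pi.smul_apply, smul_eq_mul]
    field_simp
    ring

theorem Matrix.exists_transpose_mul_diagonal_mul_eq_one_with_row [NeZero (2 : K)] {a : n → K}
    (ha : a ⬝ᵥ a ≠ 0) (hsq : IsSquare (a ⬝ᵥ a)) (i : n) :
    ∃ (c : n → K) (L : Matrix n n K), L i = a ∧ Lᵀ * diagonal c * L = 1 := by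
  -- choosing the sign of `t` keeps `a - Pi.single i t` non-isotropic
  obtain ⟨t, ht, hti⟩ : ∃ t, t * t = a ⬝ᵥ a ∧ t ≠ a i := by
    obtain ⟨r, hr⟩ := hsq
    by_cases hri : r = a i
    · refine ⟨-r, by rw [hr, neg_mul_neg], fun h => ?_⟩
      have hr0 : 2 * r = 0 := by linear_combination hri - h
      exact ha (by rw [hr, (mul_eq_zero.mp hr0).resolve_left two_ne_zero, mul_zero])
    · exact ⟨r, hr.symm, hri⟩
  have ht0 : t ≠ 0 := by rintro rfl; exact ha (by rw [← ht, mul_zero])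
  set H := householder (a - Pi.single i t)
  have hv : (a - Pi.single i t) ⬝ᵥ (a - Pi.single i t) ≠ 0 := by
    rw [sub_single_dotProduct_self i ht]
    exact mul_ne_zero (mul_ne_zero two_ne_zero ht0) (sub_ne_zero.mpr hti)
  have hH : Hᵀ * H = 1 := by rw [householder_transpose, householder_mul_self hv]
  set s : n → K := Function.update 1 i t
  have hs : ∀ j, s j ≠ 0 := fun j => by
    by_cases hj : j = i
    · subst hj; simpa [s] using ht0
    · simp [s, hj]
  have hrow : H i = t⁻¹ • a := householder_sub_single_row i ht ht0 hti
  refine ⟨_, diagonal s * H, ?_, transpose_mul_diagonal_mul_eq_one_of_orthogonal hH hs⟩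
  funext j
  simp [diagonal_mul, hrow, s, ht0]

end LinearAlgebra

section Waring

variable {σ : Type*} [Fintype σ]

theorem eval_lin (c x : σ → ℂ) : eval x (lin c) = c ⬝ᵥ x := by
  simp [lin, dotProduct]

theorem eval_sum_smul_lin_sq {ι : Type*} [Fintype ι] [DecidableEq ι] (c : ι → ℂ)
    (L : Matrix ι σ ℂ) (x : σ → ℂ) :
    eval x (∑ j, c j • lin (L j) ^ 2) = x ⬝ᵥ (Lᵀ * diagonal c * L) *ᵥ x := by
  rw [← mulVec_mulVec, ← mulVec_mulVec, dotProduct_mulVec, vecMul_transpose]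
  simp only [map_sum, smul_eval, map_pow, eval_lin, dotProduct, mulVec_diagonal]
  exact Finset.sum_congr rfl fun j _ => by simp only [mulVec, dotProduct]; ring

variable [DecidableEq σ]

theorem eval_sum_X_sq (x : σ → ℂ) :
    eval x (∑ i, X i ^ 2 : MvPolynomial σ ℂ) = x ⬝ᵥ (1 : Matrix σ σ ℂ) *ᵥ x := by
  simp [dotProduct, sq]

theorem sum_X_sq_eq_sum_smul_lin_sq_iff {ι : Type*} [Fintype ι] [DecidableEq ι] (c : ι → ℂ)
    (L : Matrix ι σ ℂ) :
    ∑ i, X i ^ 2 = ∑ j, c j • lin (L j) ^ 2 ↔ Lᵀ * diagonal c * L = 1 := by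
  rw [MvPolynomial.funext_iff]
  simp only [eval_sum_X_sq, eval_sum_smul_lin_sq]
  constructor
  · intro h
    exact (isSymm_one.eq_of_dotProduct_mulVec_self_eq
      (isSymm_transpose_mul_diagonal_mul c L) h).symm
  · intro h x
    rw [h]

theorem hasWaringDecomp_two_sum_X_sq_iff (r : ℕ) :
    HasWaringDecomp 2 (∑ i, X i ^ 2 : MvPolynomial σ ℂ) r ↔
      ∃ L : Matrix (Fin r) σ ℂ, Lᵀ * L = 1 := by
  refine exists_congr fun L => ?_
  simpa [diagonal_one] using sum_X_sq_eq_sum_smul_lin_sq_iff (fun _ => 1) L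

end Waring

theorem waringRank_two_sum_X_sq (m : ℕ) :
    waringRank 2 (∑ i, X i ^ 2 : MvPolynomial (Fin m) ℂ) = m := by
  have hmem : HasWaringDecomp 2 (∑ i, X i ^ 2 : MvPolynomial (Fin m) ℂ) m :=
    (hasWaringDecomp_two_sum_X_sq_iff m).mpr ⟨1, by simp⟩
  refine le_antisymm (Nat.sInf_le hmem) (le_csInf ⟨m, hmem⟩ fun r hr => ?_)
  obtain ⟨L, hL⟩ := (hasWaringDecomp_two_sum_X_sq_iff r).mp hr
  simpa using card_le_of_transpose_mul_diagonal_mul_eq_one (c := 1) (L := L) (by simpa using hL)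

theorem inWaringLocus_two_sum_X_sq_iff {m : ℕ} (a : Fin m → ℂ) :
    InWaringLocus 2 (∑ i, X i ^ 2 : MvPolynomial (Fin m) ℂ) a ↔ a ⬝ᵥ a ≠ 0 := by
  rw [InWaringLocus, waringRank_two_sum_X_sq]
  constructor
  · rintro ⟨c, L, j, rfl, hL⟩ hzero
    have := dotProduct_self_mul_eq_one_of_transpose_mul_diagonal_mul_eq_one
      ((sum_X_sq_eq_sum_smul_lin_sq_iff c L).mp hL) j
    simp [hzero] at this
  · intro ha
    obtain ⟨i, -⟩ := Finset.exists_ne_zero_of_sum_ne_zero ha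
    obtain ⟨c, L, hLi, hL⟩ :=
      exists_transpose_mul_diagonal_mul_eq_one_with_row ha (IsAlgClosed.exists_eq_mul_self _) i
    exact ⟨c, L, i, hLi, (sum_X_sq_eq_sum_smul_lin_sq_iff c L).mpr hL⟩

/-- the Waring/forbidden locus of the quadric `x₀² + ⋯ + xₙ²`:
it has Waring rank `n+1`, and a nonzero linear form `a₀x₀ + ⋯ + aₙxₙ` lies in the
Waring locus iff `a₀² + ⋯ + aₙ² ≠ 0`. -/
theorem waring_locus_standard_quadric (n : ℕ) :
    waringRank 2 (∑ i : Fin (n + 1), (X i : MvPolynomial (Fin (n + 1)) ℂ) ^ 2) = n + 1 ∧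
    ∀ a : Fin (n + 1) → ℂ, a ≠ 0 →
      (InWaringLocus 2 (∑ i : Fin (n + 1), (X i : MvPolynomial (Fin (n + 1)) ℂ) ^ 2) a ↔
        ∑ i, a i ^ 2 ≠ 0) := by
  refine ⟨waringRank_two_sum_X_sq (n + 1), fun a _ => ?_⟩
  rw [inWaringLocus_two_sum_X_sq_iff, dotProduct]
  simp only [sq]

end
end

section
/- Let F = x(yz + x^2) ∈ ℂ[x,y,z], a plane cubic of Waring rank 4. For a nonzero triple (a,b,c) ∈ ℂ^3, the linear form ax + by + cz lies in the forbidden locus F_F if and only if abc(a^2 − 12bc) = 0; that is, F_F = V(XYZ(X^2 − 12YZ)) ⊂ ℙ^2. -/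
open MvPolynomial

noncomputable section

abbrev Fc : MvPolynomial (Fin 3) ℂ := X 0 * (X 1 * X 2 + X 0 ^ 2)

lemma eval_lin_s8 (t c : Fin 3 → ℂ) : eval t (lin c) = c 0 * t 0 + c 1 * t 1 + c 2 * t 2 := by
  simp [lin, Fin.sum_univ_three]

lemma decomp_eval {n : ℕ} (l : Fin n → ℂ) (P : Fin n → Fin 3 → ℂ)
    (h : Fc = ∑ j, l j • lin (P j) ^ 3) (t : Fin 3 → ℂ) :
    t 0 * (t 1 * t 2 + t 0 ^ 2) = ∑ j, l j * (P j 0 * t 0 + P j 1 * t 1 + P j 2 * t 2) ^ 3 := by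
  have := congrArg (eval t) h
  simpa [smul_eq_C_mul, eval_lin_s8, Fin.sum_univ_three] using this

lemma decomp_eval4 (l : Fin 4 → ℂ) (P : Fin 4 → Fin 3 → ℂ)
    (h : Fc = ∑ j, l j • lin (P j) ^ 3) (t0 t1 t2 : ℂ) :
    t0 * (t1 * t2 + t0 ^ 2) = l 0 * (P 0 0 * t0 + P 0 1 * t1 + P 0 2 * t2) ^ 3 + l 1 * (P 1 0 * t0 + P 1 1 * t1 + P 1 2 * t2) ^ 3 + l 2 * (P 2 0 * t0 + P 2 1 * t1 + P 2 2 * t2) ^ 3 + l 3 * (P 3 0 * t0 + P 3 1 * t1 + P 3 2 * t2) ^ 3 := by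
  have := decomp_eval l P h ![t0, t1, t2]
  simpa [Fin.sum_univ_four] using this

lemma coeffs4 (l : Fin 4 → ℂ) (P : Fin 4 → Fin 3 → ℂ)
    (h : Fc = ∑ j, l j • lin (P j) ^ 3) :
    (l 0 * P 0 0 ^ 3 + l 1 * P 1 0 ^ 3 + l 2 * P 2 0 ^ 3 + l 3 * P 3 0 ^ 3 = 1) ∧
    (l 0 * P 0 1 ^ 3 + l 1 * P 1 1 ^ 3 + l 2 * P 2 1 ^ 3 + l 3 * P 3 1 ^ 3 = 0) ∧
    (l 0 * P 0 2 ^ 3 + l 1 * P 1 2 ^ 3 + l 2 * P 2 2 ^ 3 + l 3 * P 3 2 ^ 3 = 0) ∧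
    (l 0 * (P 0 0 ^ 2 * P 0 1) + l 1 * (P 1 0 ^ 2 * P 1 1) + l 2 * (P 2 0 ^ 2 * P 2 1) + l 3 * (P 3 0 ^ 2 * P 3 1) = 0) ∧
    (l 0 * (P 0 0 ^ 2 * P 0 2) + l 1 * (P 1 0 ^ 2 * P 1 2) + l 2 * (P 2 0 ^ 2 * P 2 2) + l 3 * (P 3 0 ^ 2 * P 3 2) = 0) ∧
    (l 0 * (P 0 0 * P 0 1 ^ 2) + l 1 * (P 1 0 * P 1 1 ^ 2) + l 2 * (P 2 0 * P 2 1 ^ 2) + l 3 * (P 3 0 * P 3 1 ^ 2) = 0) ∧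
    (l 0 * (P 0 1 ^ 2 * P 0 2) + l 1 * (P 1 1 ^ 2 * P 1 2) + l 2 * (P 2 1 ^ 2 * P 2 2) + l 3 * (P 3 1 ^ 2 * P 3 2) = 0) ∧
    (l 0 * (P 0 0 * P 0 2 ^ 2) + l 1 * (P 1 0 * P 1 2 ^ 2) + l 2 * (P 2 0 * P 2 2 ^ 2) + l 3 * (P 3 0 * P 3 2 ^ 2) = 0) ∧
    (l 0 * (P 0 1 * P 0 2 ^ 2) + l 1 * (P 1 1 * P 1 2 ^ 2) + l 2 * (P 2 1 * P 2 2 ^ 2) + l 3 * (P 3 1 * P 3 2 ^ 2) = 0) ∧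
    (l 0 * (P 0 0 * P 0 1 * P 0 2) + l 1 * (P 1 0 * P 1 1 * P 1 2) + l 2 * (P 2 0 * P 2 1 * P 2 2) + l 3 * (P 3 0 * P 3 1 * P 3 2) = 6⁻¹) := by
  have h1 := decomp_eval4 l P h 1 0 0
  have h2 := decomp_eval4 l P h 0 1 0
  have h3 := decomp_eval4 l P h 0 0 1
  have h4 := decomp_eval4 l P h 1 1 0
  have h5 := decomp_eval4 l P h 1 (-1) 0
  have h6 := decomp_eval4 l P h 1 0 1
  have h7 := decomp_eval4 l P h 1 0 (-1)
  have h8 := decomp_eval4 l P h 0 1 1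
  have h9 := decomp_eval4 l P h 0 1 (-1)
  have h10 := decomp_eval4 l P h 1 1 1
  refine ⟨by linear_combination -h1, by linear_combination -h2, by linear_combination -h3,
    ?_, ?_, ?_, ?_, ?_, ?_, ?_⟩
  · linear_combination (h5 - h4) / 6 + h2 / 3
  · linear_combination (h7 - h6) / 6 + h3 / 3
  · linear_combination -(h4 + h5) / 6 + h1 / 3
  · linear_combination (h9 - h8) / 6 + h3 / 3
  · linear_combination -(h6 + h7) / 6 + h1 / 3
  · linear_combination -(h8 + h9) / 6 + h2 / 3
  · linear_combination (-1/6) * h1 - (1/6) * h2 - (1/6) * h3 + (1/6) * h4 + (1/6) * h6 + (1/6) * h8 - (1/6) * h10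


lemma decomp_eval3 (l : Fin 3 → ℂ) (P : Fin 3 → Fin 3 → ℂ)
    (h : Fc = ∑ j, l j • lin (P j) ^ 3) (t0 t1 t2 : ℂ) :
    t0 * (t1 * t2 + t0 ^ 2) = l 0 * (P 0 0 * t0 + P 0 1 * t1 + P 0 2 * t2) ^ 3 + l 1 * (P 1 0 * t0 + P 1 1 * t1 + P 1 2 * t2) ^ 3 + l 2 * (P 2 0 * t0 + P 2 1 * t1 + P 2 2 * t2) ^ 3 := by
  have := decomp_eval l P h ![t0, t1, t2]
  simpa [Fin.sum_univ_three] using this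

lemma coeffs3 (l : Fin 3 → ℂ) (P : Fin 3 → Fin 3 → ℂ)
    (h : Fc = ∑ j, l j • lin (P j) ^ 3) :
    (l 0 * P 0 0 ^ 3 + l 1 * P 1 0 ^ 3 + l 2 * P 2 0 ^ 3 = 1) ∧
    (l 0 * P 0 1 ^ 3 + l 1 * P 1 1 ^ 3 + l 2 * P 2 1 ^ 3 = 0) ∧
    (l 0 * P 0 2 ^ 3 + l 1 * P 1 2 ^ 3 + l 2 * P 2 2 ^ 3 = 0) ∧
    (l 0 * (P 0 0 ^ 2 * P 0 1) + l 1 * (P 1 0 ^ 2 * P 1 1) + l 2 * (P 2 0 ^ 2 * P 2 1) = 0) ∧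
    (l 0 * (P 0 0 ^ 2 * P 0 2) + l 1 * (P 1 0 ^ 2 * P 1 2) + l 2 * (P 2 0 ^ 2 * P 2 2) = 0) ∧
    (l 0 * (P 0 0 * P 0 1 ^ 2) + l 1 * (P 1 0 * P 1 1 ^ 2) + l 2 * (P 2 0 * P 2 1 ^ 2) = 0) ∧
    (l 0 * (P 0 1 ^ 2 * P 0 2) + l 1 * (P 1 1 ^ 2 * P 1 2) + l 2 * (P 2 1 ^ 2 * P 2 2) = 0) ∧
    (l 0 * (P 0 0 * P 0 2 ^ 2) + l 1 * (P 1 0 * P 1 2 ^ 2) + l 2 * (P 2 0 * P 2 2 ^ 2) = 0) ∧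
    (l 0 * (P 0 1 * P 0 2 ^ 2) + l 1 * (P 1 1 * P 1 2 ^ 2) + l 2 * (P 2 1 * P 2 2 ^ 2) = 0) ∧
    (l 0 * (P 0 0 * P 0 1 * P 0 2) + l 1 * (P 1 0 * P 1 1 * P 1 2) + l 2 * (P 2 0 * P 2 1 * P 2 2) = 6⁻¹) := by
  have h1 := decomp_eval3 l P h 1 0 0
  have h2 := decomp_eval3 l P h 0 1 0
  have h3 := decomp_eval3 l P h 0 0 1
  have h4 := decomp_eval3 l P h 1 1 0
  have h5 := decomp_eval3 l P h 1 (-1) 0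
  have h6 := decomp_eval3 l P h 1 0 1
  have h7 := decomp_eval3 l P h 1 0 (-1)
  have h8 := decomp_eval3 l P h 0 1 1
  have h9 := decomp_eval3 l P h 0 1 (-1)
  have h10 := decomp_eval3 l P h 1 1 1
  refine ⟨by linear_combination -h1, by linear_combination -h2, by linear_combination -h3,
    ?_, ?_, ?_, ?_, ?_, ?_, ?_⟩
  · linear_combination (h5 - h4) / 6 + h2 / 3
  · linear_combination (h7 - h6) / 6 + h3 / 3
  · linear_combination -(h4 + h5) / 6 + h1 / 3
  · linear_combination (h9 - h8) / 6 + h3 / 3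
  · linear_combination -(h6 + h7) / 6 + h1 / 3
  · linear_combination -(h8 + h9) / 6 + h2 / 3
  · linear_combination (-1/6) * h1 - (1/6) * h2 - (1/6) * h3 + (1/6) * h4 + (1/6) * h6 + (1/6) * h8 - (1/6) * h10

lemma noComb3 (l : Fin 3 → ℂ) (P : Fin 3 → Fin 3 → ℂ) :
    Fc ≠ ∑ j, l j • lin (P j) ^ 3 := by
  intro h
  obtain ⟨T1, T2, T3, T4, T5, T6, T7, T8, T9, T10⟩ := coeffs3 l P h
  set M : Matrix (Fin 3) (Fin 3) ℂ := Matrix.of (fun i j => P j i) with hM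
  set B : Matrix (Fin 3) (Fin 3) ℂ := Matrix.of (fun j k =>
    ![l j * P j 0 ^ 2, 6 * (l j * (P j 0 * P j 2)), 6 * (l j * (P j 0 * P j 1))] k) with hB
  have hMB : M * B = 1 := by
    ext i k
    fin_cases i <;> fin_cases k <;>
      simp only [Matrix.mul_apply, Fin.sum_univ_three, hM, hB, Matrix.of_apply,
        Matrix.cons_val_zero, Matrix.cons_val_one, Matrix.head_cons, Matrix.cons_val_two,
        Matrix.tail_cons, Matrix.one_apply, Fin.isValue, if_true, if_false]
    · simpa using by linear_combination T1
    · simpa using by linear_combination 6 * T5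
    · simpa using by linear_combination 6 * T4
    · simpa using by linear_combination T4
    · simpa using by linear_combination 6 * T10
    · simpa using by linear_combination 6 * T6
    · simpa using by linear_combination T5
    · simpa using by linear_combination 6 * T8
    · simpa using by linear_combination 6 * T10
  have hBM : B * M = 1 := mul_eq_one_comm.mp hMB
  have hdet : M.det * B.det = 1 := by rw [← Matrix.det_mul, hMB, Matrix.det_one]
  have hker : ∀ u : Fin 3 → ℂ, M.mulVec u = 0 → u = 0 := by
    intro u hu
    have h2 : B.mulVec (M.mulVec u) = 0 := by rw [hu, Matrix.mulVec_zero]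
    rwa [Matrix.mulVec_mulVec, hBM, Matrix.one_mulVec] at h2
  have hl0 : l 0 ≠ 0 := by
    intro hl
    have : B.det = 0 := Matrix.det_eq_zero_of_row_eq_zero 0 (by
      intro k; fin_cases k <;> simp [hB, hl])
    rw [this, mul_zero] at hdet; exact one_ne_zero hdet.symm
  have hu1 : (![l 0 * P 0 1 ^ 2, l 1 * P 1 1 ^ 2, l 2 * P 2 1 ^ 2] : Fin 3 → ℂ) = 0 := by
    apply hker
    funext i; fin_cases i <;>
      simp only [Matrix.mulVec, dotProduct, Fin.sum_univ_three, hM, Matrix.of_apply,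
        Matrix.cons_val_zero, Matrix.cons_val_one, Matrix.head_cons, Matrix.cons_val_two,
        Matrix.tail_cons, Pi.zero_apply]
    · simpa using by linear_combination T6
    · simpa using by linear_combination T2
    · simpa using by linear_combination T7
  have hu2 : (![l 0 * P 0 2 ^ 2, l 1 * P 1 2 ^ 2, l 2 * P 2 2 ^ 2] : Fin 3 → ℂ) = 0 := by
    apply hker
    funext i; fin_cases i <;>
      simp only [Matrix.mulVec, dotProduct, Fin.sum_univ_three, hM, Matrix.of_apply,
        Matrix.cons_val_zero, Matrix.cons_val_one, Matrix.head_cons, Matrix.cons_val_two,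
        Matrix.tail_cons, Pi.zero_apply]
    · simpa using by linear_combination T8
    · simpa using by linear_combination T9
    · simpa using by linear_combination T3
  have hu3 : (![l 0 * (P 0 0 ^ 2 - 6 * (P 0 1 * P 0 2)), l 1 * (P 1 0 ^ 2 - 6 * (P 1 1 * P 1 2)),
      l 2 * (P 2 0 ^ 2 - 6 * (P 2 1 * P 2 2))] : Fin 3 → ℂ) = 0 := by
    apply hker
    funext i; fin_cases i <;>
      simp only [Matrix.mulVec, dotProduct, Fin.sum_univ_three, hM, Matrix.of_apply,
        Matrix.cons_val_zero, Matrix.cons_val_one, Matrix.head_cons, Matrix.cons_val_two,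
        Matrix.tail_cons, Pi.zero_apply]
    · simpa using by linear_combination T1 - 6 * T10
    · simpa using by linear_combination T4 - 6 * T7
    · simpa using by linear_combination T5 - 6 * T9
  have hq : P 0 1 = 0 := by
    have := congrFun hu1 0; simp at this
    rcases this with h' | h'; · exact absurd h' hl0
    · exact h'
  have hr : P 0 2 = 0 := by
    have := congrFun hu2 0; simp at this
    rcases this with h' | h'; · exact absurd h' hl0
    · exact h'
  have hp : P 0 0 = 0 := by
    have := congrFun hu3 0; simp [hq, hr] at this
    rcases this with h' | h'; · exact absurd h' hl0
    · exact h'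
  have : M.det = 0 := Matrix.det_eq_zero_of_column_eq_zero 0 (by
    intro i; fin_cases i <;> simp [hM, hp, hq, hr])
  rw [this, zero_mul] at hdet; exact one_ne_zero hdet.symm
lemma lin_smul (u : ℂ) (p : Fin 3 → ℂ) : lin (u • p) = C u * lin p := by
  unfold lin
  rw [Finset.mul_sum]
  refine Finset.sum_congr rfl fun i _ => ?_
  rw [Pi.smul_apply, smul_eq_mul, map_mul, mul_assoc]

lemma smul_cube (a u : ℂ) (p : Fin 3 → ℂ) :
    a • lin (u • p) ^ 3 = (a * u ^ 3) • lin p ^ 3 := by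
  rw [lin_smul, mul_pow, ← C_pow, smul_eq_C_mul, smul_eq_C_mul, map_mul]
  ring

lemma noComb4Zero (l : Fin 4 → ℂ) (P : Fin 4 → Fin 3 → ℂ)
    (h : Fc = ∑ j, l j • lin (P j) ^ 3) (j₀ : Fin 4)
    (hz : l j₀ • lin (P j₀) ^ 3 = 0) : False := by
  have h' : Fc = ∑ j : Fin 4, l (Equiv.swap j₀ 0 j) • lin (P (Equiv.swap j₀ 0 j)) ^ 3 := by
    rw [h]
    exact (Equiv.sum_comp (Equiv.swap j₀ 0) (fun j => l j • lin (P j) ^ 3)).symm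
  rw [Fin.sum_univ_succ, Equiv.swap_apply_right, hz, zero_add] at h'
  exact noComb3 (fun j => l (Equiv.swap j₀ 0 j.succ))
    (fun j => P (Equiv.swap j₀ 0 j.succ)) h'

lemma noHWD (r : ℕ) (hr : r ≤ 3) : ¬ HasWaringDecomp 3 Fc r := by
  rintro ⟨L, hL⟩
  interval_cases r
  · exact noComb3 0 0 (by rw [hL]; simp)
  · exact noComb3 ![1, 0, 0] ![L 0, 0, 0]
      (by rw [hL]; simp [Fin.sum_univ_three, Fin.sum_univ_one])
  · exact noComb3 ![1, 1, 0] ![L 0, L 1, 0]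
      (by rw [hL]; simp [Fin.sum_univ_three, Fin.sum_univ_two])
  · exact noComb3 ![1, 1, 1] ![L 0, L 1, L 2]
      (by rw [hL]; simp [Fin.sum_univ_three])

lemma combToHWD (l : Fin 4 → ℂ) (P : Fin 4 → Fin 3 → ℂ)
    (h : Fc = ∑ j, l j • lin (P j) ^ 3) : HasWaringDecomp 3 Fc 4 := by
  have hroot : ∀ j, ∃ g : ℂ, g ^ 3 = l j := fun j =>
    IsAlgClosed.exists_pow_nat_eq (l j) (by norm_num)
  choose g hg using hroot
  refine ⟨fun j => g j • P j, ?_⟩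
  rw [h]
  refine Finset.sum_congr rfl fun j _ => ?_
  rw [lin_smul, mul_pow, ← C_pow, hg, ← smul_eq_C_mul]

lemma decompFormula (a b c s : ℂ) (ha : a ≠ 0) (hb : b ≠ 0) (hc : c ≠ 0) (hs0 : s ≠ 0)
    (hs : s ^ 2 = a ^ 2 - 12 * b * c) :
    Fc = ∑ j : Fin 4, (![s, -s, -a, a] j * (24 * a * b * c * s)⁻¹) •
      lin (![![a, b, c], ![-a, b, c], ![s, b, -c], ![-s, b, -c]] j) ^ 3 := by
  have h24 : (24 : ℂ) * a * b * c * s ≠ 0 := by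
    have : (24 : ℂ) ≠ 0 := by norm_num
    exact mul_ne_zero (mul_ne_zero (mul_ne_zero (mul_ne_zero this ha) hb) hc) hs0
  have hd : (24 * a * b * c * s) * (24 * a * b * c * s)⁻¹ = 1 := mul_inv_cancel₀ h24
  apply MvPolynomial.funext
  intro x
  simp only [map_sum, smul_eq_C_mul, map_add, map_mul, map_pow, eval_C, eval_X, eval_lin_s8,
    Fin.sum_univ_four, Matrix.cons_val_zero, Matrix.cons_val_one, Matrix.head_cons,
    Matrix.cons_val_two, Matrix.tail_cons, Matrix.cons_val_three, Matrix.cons_val_fin_one]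
  linear_combination (2 * a * (24 * a * b * c * s)⁻¹ * s * x 0 ^ 3) * hs -
    (x 0 * (x 1 * x 2 + x 0 ^ 2)) * hd

lemma rank4 : waringRank 3 Fc = 4 := by
  obtain ⟨s, hs⟩ : ∃ s : ℂ, s ^ 2 = 1 ^ 2 - 12 * 1 * 1 :=
    IsAlgClosed.exists_pow_nat_eq _ (by norm_num)
  have hs0 : s ≠ 0 := by
    intro h; rw [h] at hs; norm_num at hs
  have h4 : HasWaringDecomp 3 Fc 4 :=
    combToHWD _ _ (decompFormula 1 1 1 s one_ne_zero one_ne_zero one_ne_zero hs0 hs)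
  have hmem : sInf {r | HasWaringDecomp 3 Fc r} ∈ {r | HasWaringDecomp 3 Fc r} :=
    Nat.sInf_mem ⟨4, h4⟩
  have hle : waringRank 3 Fc ≤ 4 := Nat.sInf_le h4
  rcases lt_or_ge (waringRank 3 Fc) 4 with hlt | hge
  · exact absurd hmem (noHWD _ (by unfold waringRank at hlt; omega))
  · exact le_antisymm hle hge
lemma linPzero (l : Fin 4 → ℂ) (P : Fin 4 → Fin 3 → ℂ)
    (h : Fc = ∑ j, l j • lin (P j) ^ 3) (j : Fin 4)
    (h0 : P j 0 = 0) (h1 : P j 1 = 0) (h2 : P j 2 = 0) : False := by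
  refine noComb4Zero l P h j ?_
  have : lin (P j) = 0 := by
    unfold lin
    rw [Fin.sum_univ_three, h0, h1, h2]
    simp
  rw [this]
  simp

lemma prep (l : Fin 4 → ℂ) (P : Fin 4 → Fin 3 → ℂ)
    (h : Fc = ∑ j, l j • lin (P j) ^ 3) :
    ∃ κ : Fin 4 → ℂ, (∀ j, κ j ≠ 0) ∧ (∀ j, l j ≠ 0) ∧
      (∀ i j, l i * P i 1 ^ 2 * κ j = l j * P j 1 ^ 2 * κ i) ∧
      (∀ i j, l i * P i 2 ^ 2 * κ j = l j * P j 2 ^ 2 * κ i) ∧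
      (∀ i j, l i * (P i 0 ^ 2 - 6 * (P i 1 * P i 2)) * κ j
        = l j * (P j 0 ^ 2 - 6 * (P j 1 * P j 2)) * κ i) := by
  obtain ⟨T1, T2, T3, T4, T5, T6, T7, T8, T9, T10⟩ := coeffs4 l P h
  have hlj : ∀ j, l j ≠ 0 := by
    intro j hj
    exact noComb4Zero l P h j (by rw [hj, zero_smul])
  set M : Matrix (Fin 3) (Fin 4) ℂ := Matrix.of (fun i j => P j i) with hM
  set B : Matrix (Fin 4) (Fin 3) ℂ := Matrix.of (fun j k =>
    ![l j * P j 0 ^ 2, 6 * (l j * (P j 0 * P j 2)), 6 * (l j * (P j 0 * P j 1))] k) with hB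
  have hMB : M * B = 1 := by
    ext i k
    fin_cases i <;> fin_cases k <;>
      simp only [Matrix.mul_apply, Fin.sum_univ_four, hM, hB, Matrix.of_apply,
        Matrix.cons_val_zero, Matrix.cons_val_one, Matrix.head_cons, Matrix.cons_val_two,
        Matrix.tail_cons, Matrix.one_apply, Fin.isValue, if_true, if_false]
    · simpa using by linear_combination T1
    · simpa using by linear_combination 6 * T5
    · simpa using by linear_combination 6 * T4
    · simpa using by linear_combination T4
    · simpa using by linear_combination 6 * T10
    · simpa using by linear_combination 6 * T6
    · simpa using by linear_combination T5
    · simpa using by linear_combination 6 * T8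
    · simpa using by linear_combination 6 * T10
  set f : (Fin 4 → ℂ) →ₗ[ℂ] (Fin 3 → ℂ) := Matrix.mulVecLin M with hf
  have hsurj : Function.Surjective f := by
    intro v
    refine ⟨B.mulVec v, ?_⟩
    rw [hf, Matrix.mulVecLin_apply, Matrix.mulVec_mulVec, hMB, Matrix.one_mulVec]
  have hrank : Module.finrank ℂ (LinearMap.ker f) = 1 := by
    have h1 := LinearMap.finrank_range_add_finrank_ker f
    rw [LinearMap.range_eq_top.mpr hsurj] at h1
    rw [finrank_top, Module.finrank_fin_fun, Module.finrank_fin_fun] at h1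
    omega
  obtain ⟨v0, hv0ne, hv0⟩ := finrank_eq_one_iff'.mp hrank
  set κ : Fin 4 → ℂ := fun j => (v0 : Fin 4 → ℂ) j with hκdef
  -- the three relation vectors lie in the kernel
  have mem1 : (fun j => l j * P j 1 ^ 2) ∈ LinearMap.ker f := by
    rw [LinearMap.mem_ker]
    funext i
    fin_cases i <;>
      simp only [hf, Matrix.mulVecLin_apply, Matrix.mulVec, dotProduct,
        Fin.sum_univ_four, hM, Matrix.of_apply, Pi.zero_apply]
    · simpa using by linear_combination T6
    · simpa using by linear_combination T2
    · simpa using by linear_combination T7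
  have mem2 : (fun j => l j * P j 2 ^ 2) ∈ LinearMap.ker f := by
    rw [LinearMap.mem_ker]
    funext i
    fin_cases i <;>
      simp only [hf, Matrix.mulVecLin_apply, Matrix.mulVec, dotProduct,
        Fin.sum_univ_four, hM, Matrix.of_apply, Pi.zero_apply]
    · simpa using by linear_combination T8
    · simpa using by linear_combination T9
    · simpa using by linear_combination T3
  have mem3 : (fun j => l j * (P j 0 ^ 2 - 6 * (P j 1 * P j 2))) ∈ LinearMap.ker f := by
    rw [LinearMap.mem_ker]
    funext i
    fin_cases i <;>
      simp only [hf, Matrix.mulVecLin_apply, Matrix.mulVec, dotProduct,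
        Fin.sum_univ_four, hM, Matrix.of_apply, Pi.zero_apply]
    · simpa using by linear_combination T1 - 6 * T10
    · simpa using by linear_combination T4 - 6 * T7
    · simpa using by linear_combination T5 - 6 * T9
  obtain ⟨cb, hcb⟩ := hv0 ⟨_, mem1⟩
  obtain ⟨cc, hcc⟩ := hv0 ⟨_, mem2⟩
  obtain ⟨cd, hcd⟩ := hv0 ⟨_, mem3⟩
  have e1 : ∀ j, l j * P j 1 ^ 2 = cb * κ j := by
    intro j
    have h' := congrFun (congrArg Subtype.val hcb) j
    simp only [Submodule.coe_smul, Pi.smul_apply, smul_eq_mul] at h'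
    simpa [hκdef] using h'.symm
  have e2 : ∀ j, l j * P j 2 ^ 2 = cc * κ j := by
    intro j
    have h' := congrFun (congrArg Subtype.val hcc) j
    simp only [Submodule.coe_smul, Pi.smul_apply, smul_eq_mul] at h'
    simpa [hκdef] using h'.symm
  have e3 : ∀ j, l j * (P j 0 ^ 2 - 6 * (P j 1 * P j 2)) = cd * κ j := by
    intro j
    have h' := congrFun (congrArg Subtype.val hcd) j
    simp only [Submodule.coe_smul, Pi.smul_apply, smul_eq_mul] at h'
    simpa [hκdef] using h'.symm
  have hκ : ∀ j, κ j ≠ 0 := by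
    intro j hj
    have hq : P j 1 = 0 := by
      have := e1 j; rw [hj, mul_zero] at this
      rcases mul_eq_zero.mp this with h' | h'
      · exact absurd h' (hlj j)
      · exact pow_eq_zero_iff two_ne_zero |>.mp h'
    have hr : P j 2 = 0 := by
      have := e2 j; rw [hj, mul_zero] at this
      rcases mul_eq_zero.mp this with h' | h'
      · exact absurd h' (hlj j)
      · exact pow_eq_zero_iff two_ne_zero |>.mp h'
    have hp : P j 0 = 0 := by
      have := e3 j; rw [hj, mul_zero, hq, hr] at this
      simp at this
      rcases this with h' | h'
      · exact absurd h' (hlj j)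
      · exact h'
    exact linPzero l P h j hp hq hr
  refine ⟨κ, hκ, hlj, fun i j => ?_, fun i j => ?_, fun i j => ?_⟩
  · rw [e1 i, e1 j]; ring
  · rw [e2 i, e2 j]; ring
  · rw [e3 i, e3 j]; ring
lemma regroup (ν : Fin 4 → ℂ) (τ : Fin 4 → Fin 3) (G : Fin 3 → MvPolynomial (Fin 3) ℂ) :
    ∑ j : Fin 4, ν j • G (τ j)
      = ∑ k : Fin 3, (∑ j ∈ Finset.univ.filter (fun j => τ j = k), ν j) • G k := by
  rw [← Finset.sum_fiberwise Finset.univ τ (fun j => ν j • G (τ j))]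
  refine Finset.sum_congr rfl fun k _ => ?_
  rw [Finset.sum_smul]
  refine Finset.sum_congr rfl fun j hj => ?_
  rw [(Finset.mem_filter.mp hj).2]

lemma collapse (l : Fin 4 → ℂ) (P : Fin 4 → Fin 3 → ℂ)
    (h : Fc = ∑ j, l j • lin (P j) ^ 3)
    (u : Fin 4 → ℂ) (τ : Fin 4 → Fin 3) (Q : Fin 3 → Fin 3 → ℂ)
    (hPQ : ∀ j, P j = u j • Q (τ j)) : False := by
  have h' : Fc = ∑ j : Fin 4, (fun j => l j * u j ^ 3) j • (fun k => lin (Q k) ^ 3) (τ j) := by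
    rw [h]
    refine Finset.sum_congr rfl fun j _ => ?_
    show l j • lin (P j) ^ 3 = (l j * u j ^ 3) • lin (Q (τ j)) ^ 3
    rw [hPQ j, smul_cube]
  rw [regroup (fun j => l j * u j ^ 3) τ (fun k => lin (Q k) ^ 3)] at h'
  exact noComb3 _ _ h'

lemma caseA (l : Fin 4 → ℂ) (P : Fin 4 → Fin 3 → ℂ)
    (h : Fc = ∑ j, l j • lin (P j) ^ 3)
    (ha : P 0 0 = 0) (hb : P 0 1 ≠ 0) (hc : P 0 2 ≠ 0) : False := by
  obtain ⟨κ, hκ, hlj, ee1, ee2, ee3⟩ := prep l P h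
  obtain ⟨s, hs⟩ : ∃ s : ℂ, s ^ 2 = -12 * (P 0 1 * P 0 2) :=
    IsAlgClosed.exists_pow_nat_eq _ (by norm_num)
  refine collapse l P h (fun j => P j 1 / P 0 1)
    (fun j => if P j 0 = 0 then 0 else if P j 0 = s * (P j 1 / P 0 1) then 1 else 2)
    ![![0, P 0 1, P 0 2], ![s, P 0 1, -(P 0 2)], ![-s, P 0 1, -(P 0 2)]] ?_
  intro j
  beta_reduce
  have hκ0 := hκ 0
  have hκj := hκ j
  have hl0 := hlj 0
  have hljj := hlj j
  have A1 := ee1 0 j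
  have A2 := ee2 0 j
  have A3 := ee3 0 j
  rw [ha] at A3
  have hqj : P j 1 ≠ 0 := by
    intro hq
    have h0 : l 0 * P 0 1 ^ 2 * κ j = 0 := by rw [A1, hq]; ring
    rcases mul_eq_zero.mp h0 with h' | h'
    · rcases mul_eq_zero.mp h' with h'' | h''
      · exact hl0 h''
      · exact hb (pow_eq_zero_iff two_ne_zero |>.mp h'')
    · exact hκj h'
  have hrj : P j 2 ≠ 0 := by
    intro hr
    have h0 : l 0 * P 0 2 ^ 2 * κ j = 0 := by rw [A2, hr]; ring
    rcases mul_eq_zero.mp h0 with h' | h'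
    · rcases mul_eq_zero.mp h' with h'' | h''
      · exact hl0 h''
      · exact hc (pow_eq_zero_iff two_ne_zero |>.mp h'')
    · exact hκj h'
  have key : (l j * κ 0) ^ 2 * (P j 0 ^ 2 * (P j 0 ^ 2 - 12 * (P j 1 * P j 2))) = 0 := by
    linear_combination
      (-(l 0 * ((0:ℂ) ^ 2 - 6 * (P 0 1 * P 0 2)) * κ j
          + l j * (P j 0 ^ 2 - 6 * (P j 1 * P j 2)) * κ 0)) * A3
      + (36 * (l 0 * P 0 2 ^ 2 * κ j)) * A1
      + (36 * (l j * P j 1 ^ 2 * κ 0)) * A2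
  have hlκ : (l j * κ 0) ^ 2 ≠ 0 := pow_ne_zero _ (mul_ne_zero hljj hκ0)
  have key2 : P j 0 ^ 2 * (P j 0 ^ 2 - 12 * (P j 1 * P j 2)) = 0 :=
    (mul_eq_zero.mp key).resolve_left hlκ
  rcases mul_eq_zero.mp key2 with hp0 | hp12
  · -- P j 0 = 0, type 0
    have hp0 : P j 0 = 0 := pow_eq_zero_iff two_ne_zero |>.mp hp0
    have hqr : l j * (P j 1 * P j 2) * κ 0 - l 0 * (P 0 1 * P 0 2) * κ j = 0 := by
      linear_combination (1/6 : ℂ) * A3 + ((1/6) * (l j * P j 0 * κ 0)) * hp0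
    have hz : l j * κ 0 * P j 1 * (P 0 1 * P j 2 - P 0 2 * P j 1) = 0 := by
      linear_combination (P 0 1) * hqr + (P 0 2) * A1
    have hbr : P 0 1 * P j 2 - P 0 2 * P j 1 = 0 := by
      rcases mul_eq_zero.mp hz with h' | h'
      · rcases mul_eq_zero.mp h' with h'' | h''
        · rcases mul_eq_zero.mp h'' with h3 | h3
          · exact absurd h3 hljj
          · exact absurd h3 hκ0
        · exact absurd h'' hqj
      · exact h'
    have hτ : (if P j 0 = 0 then (0 : Fin 3) else if P j 0 = s * (P j 1 / P 0 1) then 1 else 2)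
        = 0 := if_pos hp0
    rw [hτ]
    funext i
    fin_cases i
    · simpa using hp0
    · show P j 1 = P j 1 / P 0 1 * P 0 1
      field_simp
    · show P j 2 = P j 1 / P 0 1 * P 0 2
      field_simp
      linear_combination hbr
  · -- P j 0 ^ 2 = 12 qr
    have hp12 : P j 0 ^ 2 = 12 * (P j 1 * P j 2) := by linear_combination hp12
    have hpne : P j 0 ≠ 0 := by
      intro h0
      rw [h0] at hp12
      rcases mul_eq_zero.mp ((by linear_combination -hp12 : (12:ℂ) * (P j 1 * P j 2) = 0)) with
        h' | h'
      · norm_num at h'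
      · rcases mul_eq_zero.mp h' with h'' | h''
        · exact hqj h''
        · exact hrj h''
    have hqr : l j * (P j 1 * P j 2) * κ 0 + l 0 * (P 0 1 * P 0 2) * κ j = 0 := by
      linear_combination (-1/6 : ℂ) * A3 - ((1/6) * (l j * κ 0)) * hp12
    have hz : l j * κ 0 * P j 1 * (P 0 1 * P j 2 + P 0 2 * P j 1) = 0 := by
      linear_combination (P 0 1) * hqr - (P 0 2) * A1
    have hbr : P 0 1 * P j 2 + P 0 2 * P j 1 = 0 := by
      rcases mul_eq_zero.mp hz with h' | h'
      · rcases mul_eq_zero.mp h' with h'' | h''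
        · rcases mul_eq_zero.mp h'' with h3 | h3
          · exact absurd h3 hljj
          · exact absurd h3 hκ0
        · exact absurd h'' hqj
      · exact h'
    have hsq : (P 0 1 * P j 0 - s * P j 1) * (P 0 1 * P j 0 + s * P j 1) = 0 := by
      linear_combination (P 0 1 ^ 2) * hp12 - (P j 1 ^ 2) * hs
        + (12 * P 0 1 * P j 1) * hbr
    rcases mul_eq_zero.mp hsq with hps | hps
    · -- P j 0 = s * u j, type 1
      have hpu : P j 0 = s * (P j 1 / P 0 1) := by
        field_simp
        linear_combination hps
      have hτ : (if P j 0 = 0 then (0 : Fin 3) else if P j 0 = s * (P j 1 / P 0 1) then 1 else 2)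
          = 1 := by rw [if_neg hpne, if_pos hpu]
      rw [hτ]
      funext i
      fin_cases i
      · show P j 0 = P j 1 / P 0 1 * s
        rw [hpu]; ring
      · show P j 1 = P j 1 / P 0 1 * P 0 1
        field_simp
      · show P j 2 = P j 1 / P 0 1 * -(P 0 2)
        field_simp
        linear_combination hbr
    · -- P j 0 = -s * u j, type 2
      have hpu : P j 0 = -s * (P j 1 / P 0 1) := by
        field_simp
        linear_combination hps
      have hpu' : P j 0 ≠ s * (P j 1 / P 0 1) := by
        intro heq
        have hs0 : s ≠ 0 := by
          intro h0
          rw [h0] at hs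
          have : P 0 1 * P 0 2 = 0 := by linear_combination (1/12 : ℂ) * hs
          rcases mul_eq_zero.mp this with h' | h'
          · exact hb h'
          · exact hc h'
        have : (2 : ℂ) * (s * (P j 1 / P 0 1)) = 0 := by
          linear_combination hpu - heq
        have h2 : s * (P j 1 / P 0 1) = 0 := by
          rcases mul_eq_zero.mp this with h' | h'
          · norm_num at h'
          · exact h'
        rcases mul_eq_zero.mp h2 with h' | h'
        · exact hs0 h'
        · rcases div_eq_zero_iff.mp h' with h'' | h''
          · exact hqj h''
          · exact hb h''
      have hτ : (if P j 0 = 0 then (0 : Fin 3) else if P j 0 = s * (P j 1 / P 0 1) then 1 else 2)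
          = 2 := by rw [if_neg hpne, if_neg hpu']
      rw [hτ]
      funext i
      fin_cases i
      · show P j 0 = P j 1 / P 0 1 * -s
        rw [hpu]; ring
      · show P j 1 = P j 1 / P 0 1 * P 0 1
        field_simp
      · show P j 2 = P j 1 / P 0 1 * -(P 0 2)
        field_simp
        linear_combination hbr
lemma caseD (l : Fin 4 → ℂ) (P : Fin 4 → Fin 3 → ℂ)
    (h : Fc = ∑ j, l j • lin (P j) ^ 3)
    (hquad : P 0 0 ^ 2 = 12 * (P 0 1 * P 0 2))
    (ha : P 0 0 ≠ 0) (hb : P 0 1 ≠ 0) (hc : P 0 2 ≠ 0) : False := by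
  obtain ⟨κ, hκ, hlj, ee1, ee2, ee3⟩ := prep l P h
  refine collapse l P h (fun j => P j 1 / P 0 1)
    (fun j => if P j 0 = 0 then 2 else if P j 0 = P 0 0 * (P j 1 / P 0 1) then 0 else 1)
    ![![P 0 0, P 0 1, P 0 2], ![-(P 0 0), P 0 1, P 0 2], ![0, P 0 1, -(P 0 2)]] ?_
  intro j
  beta_reduce
  have hκ0 := hκ 0
  have hκj := hκ j
  have hl0 := hlj 0
  have hljj := hlj j
  have A1 := ee1 0 j
  have A2 := ee2 0 j
  have A3 := ee3 0 j
  have hqj : P j 1 ≠ 0 := by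
    intro hq
    have h0 : l 0 * P 0 1 ^ 2 * κ j = 0 := by rw [A1, hq]; ring
    rcases mul_eq_zero.mp h0 with h' | h'
    · rcases mul_eq_zero.mp h' with h'' | h''
      · exact hl0 h''
      · exact hb (pow_eq_zero_iff two_ne_zero |>.mp h'')
    · exact hκj h'
  have hrj : P j 2 ≠ 0 := by
    intro hr
    have h0 : l 0 * P 0 2 ^ 2 * κ j = 0 := by rw [A2, hr]; ring
    rcases mul_eq_zero.mp h0 with h' | h'
    · rcases mul_eq_zero.mp h' with h'' | h''
      · exact hl0 h''
      · exact hc (pow_eq_zero_iff two_ne_zero |>.mp h'')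
    · exact hκj h'
  have key : (l j * κ 0) ^ 2 * (P j 0 ^ 2 * (P j 0 ^ 2 - 12 * (P j 1 * P j 2))) = 0 := by
    linear_combination
      (-(l 0 * (P 0 0 ^ 2 - 6 * (P 0 1 * P 0 2)) * κ j
          + l j * (P j 0 ^ 2 - 6 * (P j 1 * P j 2)) * κ 0)) * A3
      + (36 * (l 0 * P 0 2 ^ 2 * κ j)) * A1
      + (36 * (l j * P j 1 ^ 2 * κ 0)) * A2
      + (l 0 ^ 2 * κ j ^ 2 * P 0 0 ^ 2) * hquad
  have hlκ : (l j * κ 0) ^ 2 ≠ 0 := pow_ne_zero _ (mul_ne_zero hljj hκ0)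
  have key2 : P j 0 ^ 2 * (P j 0 ^ 2 - 12 * (P j 1 * P j 2)) = 0 :=
    (mul_eq_zero.mp key).resolve_left hlκ
  rcases mul_eq_zero.mp key2 with hp0 | hp12
  · -- P j 0 = 0, type 2
    have hp0 : P j 0 = 0 := pow_eq_zero_iff two_ne_zero |>.mp hp0
    have hqr : l j * (P j 1 * P j 2) * κ 0 + l 0 * (P 0 1 * P 0 2) * κ j = 0 := by
      linear_combination (1/6 : ℂ) * A3 - ((1/6) * (l 0 * κ j)) * hquad
        + ((1/6) * (l j * P j 0 * κ 0)) * hp0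
    have hz : l j * κ 0 * P j 1 * (P 0 1 * P j 2 + P 0 2 * P j 1) = 0 := by
      linear_combination (P 0 1) * hqr - (P 0 2) * A1
    have hbr : P 0 1 * P j 2 + P 0 2 * P j 1 = 0 := by
      rcases mul_eq_zero.mp hz with h' | h'
      · rcases mul_eq_zero.mp h' with h'' | h''
        · rcases mul_eq_zero.mp h'' with h3 | h3
          · exact absurd h3 hljj
          · exact absurd h3 hκ0
        · exact absurd h'' hqj
      · exact h'
    have hτ : (if P j 0 = 0 then (2 : Fin 3)
        else if P j 0 = P 0 0 * (P j 1 / P 0 1) then 0 else 1) = 2 := if_pos hp0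
    rw [hτ]
    funext i
    fin_cases i
    · simpa using hp0
    · show P j 1 = P j 1 / P 0 1 * P 0 1
      field_simp
    · show P j 2 = P j 1 / P 0 1 * -(P 0 2)
      field_simp
      linear_combination hbr
  · -- P j 0 ^ 2 = 12 qr
    have hp12 : P j 0 ^ 2 = 12 * (P j 1 * P j 2) := by linear_combination hp12
    have hpne : P j 0 ≠ 0 := by
      intro h0
      rw [h0] at hp12
      rcases mul_eq_zero.mp ((by linear_combination -hp12 : (12:ℂ) * (P j 1 * P j 2) = 0)) with
        h' | h'
      · norm_num at h'
      · rcases mul_eq_zero.mp h' with h'' | h''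
        · exact hqj h''
        · exact hrj h''
    have hqr : l j * (P j 1 * P j 2) * κ 0 - l 0 * (P 0 1 * P 0 2) * κ j = 0 := by
      linear_combination (-1/6 : ℂ) * A3 - ((1/6) * (l j * κ 0)) * hp12
        + ((1/6) * (l 0 * κ j)) * hquad
    have hz : l j * κ 0 * P j 1 * (P 0 1 * P j 2 - P 0 2 * P j 1) = 0 := by
      linear_combination (P 0 1) * hqr + (P 0 2) * A1
    have hbr : P 0 1 * P j 2 - P 0 2 * P j 1 = 0 := by
      rcases mul_eq_zero.mp hz with h' | h'
      · rcases mul_eq_zero.mp h' with h'' | h''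
        · rcases mul_eq_zero.mp h'' with h3 | h3
          · exact absurd h3 hljj
          · exact absurd h3 hκ0
        · exact absurd h'' hqj
      · exact h'
    have hsq : (P 0 1 * P j 0 - P 0 0 * P j 1) * (P 0 1 * P j 0 + P 0 0 * P j 1) = 0 := by
      linear_combination (P 0 1 ^ 2) * hp12 - (P j 1 ^ 2) * hquad
        + (12 * P 0 1 * P j 1) * hbr
    rcases mul_eq_zero.mp hsq with hps | hps
    · -- P j 0 = a * u j, type 0
      have hpu : P j 0 = P 0 0 * (P j 1 / P 0 1) := by
        field_simp
        linear_combination hps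
      have hτ : (if P j 0 = 0 then (2 : Fin 3)
          else if P j 0 = P 0 0 * (P j 1 / P 0 1) then 0 else 1) = 0 := by
        rw [if_neg hpne, if_pos hpu]
      rw [hτ]
      funext i
      fin_cases i
      · show P j 0 = P j 1 / P 0 1 * P 0 0
        rw [hpu]; ring
      · show P j 1 = P j 1 / P 0 1 * P 0 1
        field_simp
      · show P j 2 = P j 1 / P 0 1 * P 0 2
        field_simp
        linear_combination hbr
    · -- P j 0 = -a * u j, type 1
      have hpu : P j 0 = -(P 0 0) * (P j 1 / P 0 1) := by
        field_simp
        linear_combination hps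
      have hpu' : P j 0 ≠ P 0 0 * (P j 1 / P 0 1) := by
        intro heq
        have h2 : (2 : ℂ) * (P 0 0 * (P j 1 / P 0 1)) = 0 := by
          linear_combination hpu - heq
        have h3 : P 0 0 * (P j 1 / P 0 1) = 0 := by
          rcases mul_eq_zero.mp h2 with h' | h'
          · norm_num at h'
          · exact h'
        rcases mul_eq_zero.mp h3 with h' | h'
        · exact ha h'
        · rcases div_eq_zero_iff.mp h' with h'' | h''
          · exact hqj h''
          · exact hb h''
      have hτ : (if P j 0 = 0 then (2 : Fin 3)
          else if P j 0 = P 0 0 * (P j 1 / P 0 1) then 0 else 1) = 1 := by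
        rw [if_neg hpne, if_neg hpu']
      rw [hτ]
      funext i
      fin_cases i
      · show P j 0 = P j 1 / P 0 1 * -(P 0 0)
        rw [hpu]; ring
      · show P j 1 = P j 1 / P 0 1 * P 0 1
        field_simp
      · show P j 2 = P j 1 / P 0 1 * P 0 2
        field_simp
        linear_combination hbr
lemma caseB (l : Fin 4 → ℂ) (P : Fin 4 → Fin 3 → ℂ)
    (h : Fc = ∑ j, l j • lin (P j) ^ 3) (hb : P 0 1 = 0) : False := by
  obtain ⟨κ, hκ, hlj, ee1, ee2, ee3⟩ := prep l P h
  obtain ⟨T1, T2, T3, T4, T5, T6, T7, T8, T9, T10⟩ := coeffs4 l P h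
  have hq : ∀ j, P j 1 = 0 := by
    intro j
    have h1 := ee1 0 j
    have h0 : l j * P j 1 ^ 2 * κ 0 = 0 := by rw [← h1, hb]; ring
    rcases mul_eq_zero.mp h0 with h' | h'
    · rcases mul_eq_zero.mp h' with h'' | h''
      · exact absurd h'' (hlj j)
      · exact pow_eq_zero_iff two_ne_zero |>.mp h''
    · exact absurd h' (hκ 0)
  rw [hq 0, hq 1, hq 2, hq 3] at T10
  simp at T10

lemma caseC (l : Fin 4 → ℂ) (P : Fin 4 → Fin 3 → ℂ)
    (h : Fc = ∑ j, l j • lin (P j) ^ 3) (hc : P 0 2 = 0) : False := by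
  obtain ⟨κ, hκ, hlj, ee1, ee2, ee3⟩ := prep l P h
  obtain ⟨T1, T2, T3, T4, T5, T6, T7, T8, T9, T10⟩ := coeffs4 l P h
  have hr : ∀ j, P j 2 = 0 := by
    intro j
    have h1 := ee2 0 j
    have h0 : l j * P j 2 ^ 2 * κ 0 = 0 := by rw [← h1, hc]; ring
    rcases mul_eq_zero.mp h0 with h' | h'
    · rcases mul_eq_zero.mp h' with h'' | h''
      · exact absurd h'' (hlj j)
      · exact pow_eq_zero_iff two_ne_zero |>.mp h''
    · exact absurd h' (hκ 0)
  rw [hr 0, hr 1, hr 2, hr 3] at T10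
  simp at T10

lemma noComb4At (l : Fin 4 → ℂ) (P : Fin 4 → Fin 3 → ℂ)
    (h : Fc = ∑ j, l j • lin (P j) ^ 3)
    (hg : P 0 0 * P 0 1 * P 0 2 * (P 0 0 ^ 2 - 12 * P 0 1 * P 0 2) = 0) : False := by
  by_cases hb : P 0 1 = 0
  · exact caseB l P h hb
  by_cases hc : P 0 2 = 0
  · exact caseC l P h hc
  by_cases ha : P 0 0 = 0
  · exact caseA l P h ha hb hc
  have hquad : P 0 0 ^ 2 = 12 * (P 0 1 * P 0 2) := by
    rcases mul_eq_zero.mp hg with h' | h'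
    · exfalso
      rcases mul_eq_zero.mp h' with h'' | h''
      · rcases mul_eq_zero.mp h'' with h3 | h3
        · exact ha h3
        · exact hb h3
      · exact hc h''
    · linear_combination h'
  exact caseD l P h hquad ha hb hc

/-- forbidden locus of the plane cubic `F = x(yz + x²)` (a line plus a
transversal conic): `F` has Waring rank 4 and a nonzero linear form `ax + by + cz` is
forbidden iff `abc(a² - 12bc) = 0`. -/
theorem forbidden_locus_line_plus_conic :
    waringRank 3 (X 0 * (X 1 * X 2 + X 0 ^ 2) : MvPolynomial (Fin 3) ℂ) = 4 ∧
    ∀ a : Fin 3 → ℂ, a ≠ 0 →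
      (¬ InWaringLocus 3 (X 0 * (X 1 * X 2 + X 0 ^ 2) : MvPolynomial (Fin 3) ℂ) a ↔
        a 0 * a 1 * a 2 * (a 0 ^ 2 - 12 * a 1 * a 2) = 0) := by
  have rank4' : waringRank 3 (X 0 * (X 1 * X 2 + X 0 ^ 2) : MvPolynomial (Fin 3) ℂ) = 4 := rank4
  refine ⟨rank4', fun a ha0 => ?_⟩
  constructor
  · -- forbidden → polynomial condition
    intro hnot
    by_contra hprod
    apply hnot
    have hA : a 0 ≠ 0 := fun h => hprod (by rw [h]; ring)
    have hB : a 1 ≠ 0 := fun h => hprod (by rw [h]; ring)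
    have hC : a 2 ≠ 0 := fun h => hprod (by rw [h]; ring)
    have hQ : a 0 ^ 2 - 12 * a 1 * a 2 ≠ 0 := fun h => hprod (by rw [h, mul_zero])
    obtain ⟨s, hs⟩ : ∃ s : ℂ, s ^ 2 = a 0 ^ 2 - 12 * a 1 * a 2 :=
      IsAlgClosed.exists_pow_nat_eq _ (by norm_num)
    have hs0 : s ≠ 0 := by
      intro h0
      rw [h0] at hs
      exact hQ (by linear_combination -hs)
    unfold InWaringLocus
    rw [rank4']
    refine ⟨fun j => ![s, -s, -(a 0), a 0] j * (24 * a 0 * a 1 * a 2 * s)⁻¹,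
      ![![a 0, a 1, a 2], ![-(a 0), a 1, a 2], ![s, a 1, -(a 2)], ![-s, a 1, -(a 2)]],
      0, ?_, ?_⟩
    · funext i
      fin_cases i <;> simp
    · have hh : s ^ 2 = a 0 ^ 2 - 12 * (a 1) * (a 2) := by linear_combination hs
      exact decompFormula (a 0) (a 1) (a 2) s hA hB hC hs0 hh
  · -- polynomial condition → forbidden
    intro hprod hW
    unfold InWaringLocus at hW
    rw [rank4'] at hW
    obtain ⟨cvec, L, j₀, hL, hF⟩ := hW
    have h' : (X 0 * (X 1 * X 2 + X 0 ^ 2) : MvPolynomial (Fin 3) ℂ) = ∑ j : Fin 4,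
        cvec (Equiv.swap j₀ 0 j) • lin (L (Equiv.swap j₀ 0 j)) ^ 3 := by
      rw [hF]
      exact (Equiv.sum_comp (Equiv.swap j₀ 0) (fun j => cvec j • lin (L j) ^ 3)).symm
    refine noComb4At (fun j => cvec (Equiv.swap j₀ 0 j))
      (fun j => L (Equiv.swap j₀ 0 j)) h' ?_
    beta_reduce
    rw [Equiv.swap_apply_right, hL]
    exact hprod

end
end

section
/- Let F ∈ ℂ[x,y,z] be a plane cubic of Waring rank 4 and let 𝕏 = {P_1, P_2, P_3, P_4} ⊂ ℙ^2 be a set of four distinct points apolar to F (i.e., the homogeneous ideal I_𝕏 of forms vanishing on 𝕏 is contained in the apolar ideal F^⊥). If 𝕏 contains exactly three collinear points, then F is a cuspidal cubic: there exist linearly independent linear forms N, L, M ∈ ℂ[x,y,z] such that F = N^3 + LM^2. -/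
/-!
Split off the point `P₀ ∈ 𝕏` off the line: `F = c₀P₀³ + G`, where `G = k₁A³ + k₂B³ + k₃(αA + βB)³`
is a binary cubic in the independent linear forms `A, B` of two of the collinear points; all
coefficients are nonzero since `rk F = 4`. The coefficients of `G` satisfy the linear recurrence
given by its Hessian. If the Hessian has two distinct roots, `G` is a sum of two cubes and
`rk F ≤ 3`; so it has a double root, and then `G = L M²` with `L, M` independent forms on the line.
-/

open MvPolynomial

noncomputable section

lemma lin_add {σ : Type*} [Fintype σ] (u v : σ → ℂ) : lin (u + v) = lin u + lin v := by
  simp only [lin, Pi.add_apply, map_add, add_mul, Finset.sum_add_distrib]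

lemma lin_smul_s11 {σ : Type*} [Fintype σ] (t : ℂ) (u : σ → ℂ) : lin (t • u) = t • lin u := by
  simp only [lin, Pi.smul_apply, smul_eq_mul, map_mul, Finset.smul_sum, smul_eq_C_mul, mul_assoc]

lemma lin_smul_pow {σ : Type*} [Fintype σ] (γ : ℂ) (v : σ → ℂ) (d : ℕ) :
    lin (γ • v) ^ d = γ ^ d • lin v ^ d := by
  rw [lin_smul_s11, smul_pow]

section Waring

variable {σ : Type*} [Fintype σ] {d : ℕ} {F : MvPolynomial σ ℂ}

lemma waringRank_le {r : ℕ} (h : HasWaringDecomp d F r) : waringRank d F ≤ r :=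
  Nat.sInf_le h

lemma hasWaringDecomp_of_eq_sum_smul (hd : d ≠ 0) {r : ℕ} {c : Fin r → ℂ} {p : Fin r → σ → ℂ}
    (h : F = ∑ j, c j • lin (p j) ^ d) : HasWaringDecomp d F r := by
  choose γ hγ using fun j => IsAlgClosed.exists_pow_nat_eq (c j) (Nat.pos_of_ne_zero hd)
  exact ⟨fun j => γ j • p j, by simp only [h, lin_smul_pow, hγ]⟩

lemma coeff_ne_zero_of_waringRank_eq (hd : d ≠ 0) {n : ℕ} (hrk : waringRank d F = n + 1)
    {c : Fin (n + 1) → ℂ} {p : Fin (n + 1) → σ → ℂ} (h : F = ∑ j, c j • lin (p j) ^ d)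
    (j : Fin (n + 1)) : c j ≠ 0 := by
  intro hj
  have hF : F = ∑ k, c (j.succAbove k) • lin (p (j.succAbove k)) ^ d := by
    rw [h, Fin.sum_univ_succAbove _ j, hj, zero_smul, zero_add]
  have := waringRank_le (hasWaringDecomp_of_eq_sum_smul hd hF)
  omega

end Waring

section LinearAlgebra

variable {K : Type*} [Field K]

theorem not_linearIndependent_of_dotProduct_eq_zero {n : Type*} [Fintype n] [DecidableEq n]
    {v : n → n → K} {w : n → K} (hw : w ≠ 0) (h : ∀ i, w ⬝ᵥ v i = 0) :
    ¬ LinearIndependent K v := by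
  have hdet : (Matrix.of v).det = 0 :=
    Matrix.exists_mulVec_eq_zero_iff.mp ⟨w, hw, funext fun i => by
      simpa [Matrix.mulVec, dotProduct_comm] using h i⟩
  rw [show v = (Matrix.of v).row from rfl, Matrix.linearIndependent_rows_iff_isUnit,
    Matrix.isUnit_iff_isUnit_det, hdet]
  exact not_isUnit_zero

theorem exists_smul_add_smul_eq_of_dotProduct_eq_zero {x y z w : Fin 3 → K} (hw : w ≠ 0)
    (hxy : LinearIndependent K ![x, y]) (hx : w ⬝ᵥ x = 0) (hy : w ⬝ᵥ y = 0) (hz : w ⬝ᵥ z = 0)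
    (hzx : ∀ t : K, z ≠ t • x) (hzy : ∀ t : K, z ≠ t • y) :
    ∃ α β : K, α ≠ 0 ∧ β ≠ 0 ∧ α • x + β • y = z := by
  have hdep : ¬ LinearIndependent K ![z, x, y] :=
    not_linearIndependent_of_dotProduct_eq_zero hw (by simp [Fin.forall_fin_succ, hx, hy, hz])
  rw [Matrix.vecCons, linearIndependent_finCons] at hdep
  push Not at hdep
  obtain ⟨α, β, hαβ⟩ := Submodule.mem_span_pair.mp (by simpa [Set.pair_comm] using hdep hxy)
  refine ⟨α, β, ?_, ?_, hαβ⟩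
  · rintro rfl
    exact hzy β (by rw [← hαβ, zero_smul, zero_add])
  · rintro rfl
    exact hzx α (by rw [← hαβ, zero_smul, add_zero])

theorem linearIndependent_vecCons_of_dotProduct_ne_zero {n : Type*} [Fintype n] {x y z w : n → K}
    (hxy : LinearIndependent K ![x, y]) (hx : w ⬝ᵥ x = 0) (hy : w ⬝ᵥ y = 0) (hz : w ⬝ᵥ z ≠ 0) :
    LinearIndependent K ![z, x, y] := by
  refine linearIndependent_finCons.mpr ⟨hxy, fun hmem => hz ?_⟩
  obtain ⟨a, b, rfl⟩ := Submodule.mem_span_pair.mp (by simpa [Set.pair_comm] using hmem)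
  simp [dotProduct_add, dotProduct_smul, hx, hy]

theorem LinearIndependent.pair_smul_add_smul {V : Type*} [AddCommGroup V] [Module K V] {x y : V}
    (hxy : LinearIndependent K ![x, y]) {l₁ l₂ m₁ m₂ : K} (hdet : l₁ * m₂ - l₂ * m₁ ≠ 0) :
    LinearIndependent K ![l₁ • x + l₂ • y, m₁ • x + m₂ • y] := by
  rw [LinearIndependent.pair_iff] at hxy ⊢
  intro s t hst
  obtain ⟨hx, hy⟩ := hxy (s * l₁ + t * m₁) (s * l₂ + t * m₂) (by
    rw [← hst]; simp only [smul_add, smul_smul, add_smul]; abel)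
  have hs : s * (l₁ * m₂ - l₂ * m₁) = 0 := by linear_combination m₂ * hx - m₁ * hy
  have ht : t * (l₁ * m₂ - l₂ * m₁) = 0 := by linear_combination l₁ * hy - l₂ * hx
  exact ⟨(mul_eq_zero.mp hs).resolve_right hdet, (mul_eq_zero.mp ht).resolve_right hdet⟩

end LinearAlgebra

section BinaryCubic

variable {K R : Type*} [Field K] [CommRing R] [Algebra K R]

def binaryCubic (a b c d : K) (A B : R) : R :=
  a • A ^ 3 + (3 * b) • (A ^ 2 * B) + (3 * c) • (A * B ^ 2) + d • B ^ 3

lemma binaryCubic_eq_smul_cube_add_smul_cube {a b c d u v r₁ r₂ : K} (ha : u + v = a)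
    (hb : u * r₁ + v * r₂ = b) (hc : c = (r₁ + r₂) * b - r₁ * r₂ * a)
    (hd : d = (r₁ + r₂) * c - r₁ * r₂ * b) (A B : R) :
    binaryCubic a b c d A B = u • (A + r₁ • B) ^ 3 + v • (A + r₂ • B) ^ 3 := by
  have hc' : c = u * r₁ ^ 2 + v * r₂ ^ 2 := by rw [hc, ← ha, ← hb]; ring
  have hd' : d = u * r₁ ^ 3 + v * r₂ ^ 3 := by rw [hd, hc', ← hb]; ring
  subst ha hb hc' hd'
  simp only [binaryCubic, Algebra.smul_def, map_add, map_mul, map_pow, map_ofNat]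
  ring

lemma binaryCubic_eq_mul_sq {a b c d r : K} (hc : c = 2 * r * b - r ^ 2 * a)
    (hd : d = 2 * r * c - r ^ 2 * b) (A B : R) :
    binaryCubic a b c d A B = (a • A + (3 * b - 2 * a * r) • B) * (A + r • B) ^ 2 := by
  subst hc hd
  simp only [binaryCubic, Algebra.smul_def, map_sub, map_mul, map_pow, map_ofNat]
  ring

lemma exists_mul_add_eq_and_mul_mul_eq [IsAlgClosed K] [NeZero (2 : K)] {P : K} (hP : P ≠ 0)
    (Q S : K) : ∃ r₁ r₂ : K, P * (r₁ + r₂) = Q ∧ P * (r₁ * r₂) = S := by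
  obtain ⟨r, hr⟩ := exists_quadratic_eq_zero hP (IsAlgClosed.exists_eq_mul_self (discrim P (-Q) S))
  refine ⟨r, Q / P - r, by field_simp; ring, ?_⟩
  field_simp
  linear_combination -hr

theorem binaryCubic_eq_add_cubes_or_mul_sq [IsAlgClosed K] [CharZero K] {a b c d : K}
    (hP : a * c - b ^ 2 ≠ 0) (A B : R) :
    (∃ s t u v : K, binaryCubic a b c d A B = (s • A + t • B) ^ 3 + (u • A + v • B) ^ 3) ∨
      ∃ l₁ l₂ m₁ m₂ : K, l₁ * m₂ - l₂ * m₁ ≠ 0 ∧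
        binaryCubic a b c d A B = (l₁ • A + l₂ • B) * (m₁ • A + m₂ • B) ^ 2 := by
  -- `P z² - Q z + S` with `P = ac - b²`, `Q = ad - bc`, `S = bd - c²` is the Hessian of the cubic;
  -- it is apolar to it (`S a - Q b + P c = 0 = S b - Q c + P d`), so `a, b, c, d` satisfy the
  -- linear recurrence whose characteristic roots are the roots `r₁, r₂` of the Hessian.
  obtain ⟨r₁, r₂, hsum, hprod⟩ :=
    exists_mul_add_eq_and_mul_mul_eq hP (a * d - b * c) (b * d - c ^ 2)
  have hc : c = (r₁ + r₂) * b - r₁ * r₂ * a :=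
    mul_left_cancel₀ hP (by linear_combination a * hprod - b * hsum)
  have hd : d = (r₁ + r₂) * c - r₁ * r₂ * b :=
    mul_left_cancel₀ hP (by linear_combination b * hprod - c * hsum)
  rcases eq_or_ne r₁ r₂ with rfl | hr
  · right
    refine ⟨a, 3 * b - 2 * a * r₁, 1, r₁, fun hdet => hP ?_, ?_⟩
    · linear_combination a * hc - (a * r₁ - b) * hdet / 3
    · rw [one_smul]
      exact binaryCubic_eq_mul_sq (by linear_combination hc) (by linear_combination hd) A B
  · left
    have hr' : r₁ - r₂ ≠ 0 := sub_ne_zero.mpr hr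
    obtain ⟨u, v, ha, hb⟩ : ∃ u v : K, u + v = a ∧ u * r₁ + v * r₂ = b :=
      ⟨(b - a * r₂) / (r₁ - r₂), (a * r₁ - b) / (r₁ - r₂), by field_simp; ring, by field_simp; ring⟩
    obtain ⟨σ, rfl⟩ := IsAlgClosed.exists_pow_nat_eq u three_pos
    obtain ⟨τ, rfl⟩ := IsAlgClosed.exists_pow_nat_eq v three_pos
    refine ⟨σ, σ * r₁, τ, τ * r₂, ?_⟩
    rw [binaryCubic_eq_smul_cube_add_smul_cube ha hb hc hd, ← smul_pow, ← smul_pow, smul_add,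
      smul_add, smul_smul, smul_smul]

theorem smul_cube_add_smul_cube_add_smul_cube_eq_add_cubes_or_mul_sq [IsAlgClosed K] [CharZero K]
    {k₁ k₃ α β : K} (hk₁ : k₁ ≠ 0) (hk₃ : k₃ ≠ 0) (hα : α ≠ 0) (hβ : β ≠ 0) (k₂ : K) (A B : R) :
    (∃ s t u v : K, k₁ • A ^ 3 + k₂ • B ^ 3 + k₃ • (α • A + β • B) ^ 3 =
        (s • A + t • B) ^ 3 + (u • A + v • B) ^ 3) ∨
      ∃ l₁ l₂ m₁ m₂ : K, l₁ * m₂ - l₂ * m₁ ≠ 0 ∧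
        k₁ • A ^ 3 + k₂ • B ^ 3 + k₃ • (α • A + β • B) ^ 3 =
          (l₁ • A + l₂ • B) * (m₁ • A + m₂ • B) ^ 2 := by
  have hG : k₁ • A ^ 3 + k₂ • B ^ 3 + k₃ • (α • A + β • B) ^ 3 =
      binaryCubic (k₁ + k₃ * α ^ 3) (k₃ * α ^ 2 * β) (k₃ * α * β ^ 2) (k₂ + k₃ * β ^ 3) A B := by
    simp only [binaryCubic, Algebra.smul_def, map_add, map_mul, map_pow, map_ofNat]
    ring
  have hP : (k₁ + k₃ * α ^ 3) * (k₃ * α * β ^ 2) - (k₃ * α ^ 2 * β) ^ 2 ≠ 0 := by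
    rw [show (k₁ + k₃ * α ^ 3) * (k₃ * α * β ^ 2) - (k₃ * α ^ 2 * β) ^ 2 = k₁ * k₃ * α * β ^ 2 by
      ring]
    exact mul_ne_zero (mul_ne_zero (mul_ne_zero hk₁ hk₃) hα) (pow_ne_zero 2 hβ)
  rw [hG]
  exact binaryCubic_eq_add_cubes_or_mul_sq hP A B

end BinaryCubic

theorem rank_four_cubic_with_three_collinear_apolar_points_is_cusp_general
    (F : MvPolynomial (Fin 3) ℂ)
    (hrk : waringRank 3 F = 4)
    (p : Fin 4 → Fin 3 → ℂ)
    (hdist : ∀ j k, j ≠ k → ∀ t : ℂ, p j ≠ t • p k)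
    (c : Fin 4 → ℂ) (hapolar : F = ∑ j, c j • lin (p j) ^ 3)
    (w : Fin 3 → ℂ) (j₀ : Fin 4)
    (hline : ∀ j, j ≠ j₀ → ∑ i, w i * p j i = 0)
    (hoff : ∑ i, w i * p j₀ i ≠ 0) :
    ∃ N L M : Fin 3 → ℂ, LinearIndependent ℂ ![N, L, M] ∧
      F = lin N ^ 3 + lin L * lin M ^ 2 := by
  set q : Fin 3 → Fin 3 → ℂ := fun k => p (j₀.succAbove k)
  have hc := coeff_ne_zero_of_waringRank_eq three_ne_zero hrk hapolar
  have hq : ∀ k, w ⬝ᵥ q k = 0 := fun k => hline _ (Fin.succAbove_ne j₀ k)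
  have hqdist : ∀ k l, k ≠ l → ∀ t : ℂ, q k ≠ t • q l := fun k l hkl =>
    hdist _ _ (Fin.succAbove_right_injective.ne hkl)
  have hq01 : LinearIndependent ℂ ![q 0, q 1] :=
    (LinearIndependent.pair_iff' (by simpa using hqdist 0 1 (by decide) 0)).mpr
      fun t h => hqdist 1 0 (by decide) t h.symm
  obtain ⟨α, β, hα, hβ, hq2⟩ := exists_smul_add_smul_eq_of_dotProduct_eq_zero
    (by rintro rfl; simp at hoff) hq01 (hq 0) (hq 1) (hq 2) (hqdist 2 0 (by decide))
    (hqdist 2 1 (by decide))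
  obtain ⟨δ, hδ⟩ := IsAlgClosed.exists_pow_nat_eq (c j₀) three_pos
  have hF : F = lin (δ • p j₀) ^ 3 + (c (j₀.succAbove 0) • lin (q 0) ^ 3 +
      c (j₀.succAbove 1) • lin (q 1) ^ 3 + c (j₀.succAbove 2) • lin (q 2) ^ 3) := by
    rw [hapolar, Fin.sum_univ_succAbove _ j₀, Fin.sum_univ_three, lin_smul_pow, hδ]
  rw [← hq2, lin_add, lin_smul_s11 α, lin_smul_s11 β] at hF
  rcases smul_cube_add_smul_cube_add_smul_cube_eq_add_cubes_or_mul_sq (hc (j₀.succAbove 0))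
      (hc (j₀.succAbove 2)) hα hβ (c (j₀.succAbove 1)) (lin (q 0)) (lin (q 1)) with
    ⟨s, t, u, v, hG⟩ | ⟨l₁, l₂, m₁, m₂, hdet, hG⟩
  · have : waringRank 3 F ≤ 3 := waringRank_le
      ⟨![δ • p j₀, s • q 0 + t • q 1, u • q 0 + v • q 1], by
        simp [hF, hG, Fin.sum_univ_three, lin_add, lin_smul_s11, add_assoc]⟩
    omega
  · have hδ0 : δ ≠ 0 := by rintro rfl; exact hc j₀ (by simp [← hδ])
    refine ⟨δ • p j₀, l₁ • q 0 + l₂ • q 1, m₁ • q 0 + m₂ • q 1, ?_, by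
      simp only [hF, hG, lin_add, lin_smul_s11]⟩
    exact linearIndependent_vecCons_of_dotProduct_ne_zero (w := w) (hq01.pair_smul_add_smul hdet)
      (by simp [dotProduct_add, dotProduct_smul, hq])
      (by simp [dotProduct_add, dotProduct_smul, hq])
      (by rw [dotProduct_smul, smul_eq_mul]; exact mul_ne_zero hδ0 hoff)

/-- a plane cubic of Waring rank 4 admitting an apolar set of four
distinct points of which exactly three are collinear is a cuspidal cubic
`F = N³ + LM²`.  (By the Apolarity Lemma, a set of points is apolar to `F` iff `F` is
a linear combination of the cubes of the corresponding linear forms.) -/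
theorem rank_four_cubic_with_three_collinear_apolar_points_is_cusp
    (F : MvPolynomial (Fin 3) ℂ) (hhom : F.IsHomogeneous 3)
    (hrk : waringRank 3 F = 4)
    (p : Fin 4 → Fin 3 → ℂ) (hp0 : ∀ j, p j ≠ 0)
    (hdist : ∀ j k, j ≠ k → ∀ t : ℂ, p j ≠ t • p k)
    (c : Fin 4 → ℂ) (hapolar : F = ∑ j, c j • lin (p j) ^ 3)
    (w : Fin 3 → ℂ) (hw : w ≠ 0) (j₀ : Fin 4)
    (hline : ∀ j, j ≠ j₀ → ∑ i, w i * p j i = 0)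
    (hoff : ∑ i, w i * p j₀ i ≠ 0) :
    ∃ N L M : Fin 3 → ℂ, LinearIndependent ℂ ![N, L, M] ∧
      F = lin N ^ 3 + lin L * lin M ^ 2 :=
  rank_four_cubic_with_three_collinear_apolar_points_is_cusp_general F hrk p hdist c hapolar w j₀
    hline hoff

end
end

section
/- Let F = M_1 + M_2 = x_0^{a_0}x_1^{a_1}⋯x_n^{a_n} + y_0^{b_0}y_1^{b_1}⋯y_m^{b_m} ∈ S = ℂ[x_0,…,x_n,y_0,…,y_m], a sum of two monomials of the same degree d ≥ 1 in disjoint sets of variables, with all exponents at least 1. Let T be the dual ring acting on S by letting each dual variable act as the corresponding partial derivative. Then the ℂ-vector space dimensions of the apolar quotients satisfy dim_ℂ T/F^⊥ = dim_ℂ T/M_1^⊥ + dim_ℂ T/M_2^⊥ − 2. -/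
/-!
The length of `T/F^⊥` is the dimension of the space of all partial derivatives of `F`, the image
of `g ↦ g ∘ F`. The derivatives of a monomial `x^s` span exactly the monomials `x^e` with
`e ≤ s`. For `F = x^s + x^t` in disjoint variables, every derivative of positive order
annihilates one of the two summands, so the derivatives of `F` span `F` together with the proper
divisors of `x^s` and of `x^t`; these two families of divisors share only `1`, and `F` is
independent of them. Counting gives `1 + (#[0,s] - 1) + (#[0,t] - 1) - 1`.
-/

open MvPolynomial

noncomputable section

/-- The iterated partial derivative operator `∂^m = ∏ᵢ ∂ᵢ^{mᵢ}` attached to a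
multi-exponent `m`. -/
def mderiv {σ : Type*} [Fintype σ] (m : σ →₀ ℕ) :
    Module.End ℂ (MvPolynomial σ ℂ) :=
  (Finset.univ.toList.map fun i : σ =>
    ((pderiv i).toLinearMap : Module.End ℂ (MvPolynomial σ ℂ)) ^ m i).prod

/-- The apolarity action `g ∘ F` of the dual polynomial ring on `S`:
each dual variable acts as the corresponding partial derivative. -/
def contract {σ : Type*} [Fintype σ] (g F : MvPolynomial σ ℂ) : MvPolynomial σ ℂ :=
  ∑ m ∈ g.support, coeff m g • mderiv m F

lemma contract_add {σ : Type*} [Fintype σ] (g h F : MvPolynomial σ ℂ) :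
    contract (g + h) F = contract g F + contract h F := by
  classical
  rw [contract, Finset.sum_subset (support_add (p := g) (q := h))
    (fun m _ hm => by simp [MvPolynomial.notMem_support_iff.mp hm])]
  simp_rw [coeff_add, add_smul, Finset.sum_add_distrib]
  congr 1
  · exact (Finset.sum_subset Finset.subset_union_left fun m _ hm => by
      simp [MvPolynomial.notMem_support_iff.mp hm]).symm
  · exact (Finset.sum_subset Finset.subset_union_right fun m _ hm => by
      simp [MvPolynomial.notMem_support_iff.mp hm]).symm

lemma contract_smul {σ : Type*} [Fintype σ] (c : ℂ) (g F : MvPolynomial σ ℂ) :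
    contract (c • g) F = c • contract g F := by
  classical
  rw [contract, Finset.sum_subset (support_smul (a := c) (f := g))
    (fun m _ hm => by simp [MvPolynomial.notMem_support_iff.mp hm]), contract, Finset.smul_sum]
  exact Finset.sum_congr rfl fun m _ => by rw [coeff_smul, smul_assoc]

/-- The apolar ideal `F^⊥ = {g : g ∘ F = 0}` of `F`, viewed as a `ℂ`-subspace of the
dual polynomial ring (as an ideal it is in particular a `ℂ`-subspace, and the
dimension of the quotient is the length of the apolar algebra `T/F^⊥`). -/
def perp {σ : Type*} [Fintype σ] (F : MvPolynomial σ ℂ) :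
    Submodule ℂ (MvPolynomial σ ℂ) where
  carrier := {g | contract g F = 0}
  add_mem' := by
    intro p q hp hq
    simp only [Set.mem_setOf_eq] at *
    rw [contract_add, hp, hq, add_zero]
  zero_mem' := by simp [contract]
  smul_mem' := by
    intro c g hg
    simp only [Set.mem_setOf_eq] at *
    rw [contract_smul, hg, smul_zero]

theorem Submodule.finrank_sup_span_singleton_of_notMem {K V : Type*} [DivisionRing K]
    [AddCommGroup V] [Module K V] {p : Submodule K V} [FiniteDimensional K p] {v : V}
    (hv : v ∉ p) : Module.finrank K ↥(p ⊔ K ∙ v) = Module.finrank K p + 1 := by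
  have h := Submodule.finrank_sup_add_finrank_inf_eq p (K ∙ v)
  rwa [(Submodule.disjoint_span_singleton_of_notMem hv).eq_bot, finrank_bot, add_zero,
    finrank_span_singleton (by rintro rfl; exact hv p.zero_mem)] at h

theorem Finset.Iio_inter_Iio_of_disjoint {α : Type*} [Lattice α] [OrderBot α]
    [LocallyFiniteOrderBot α] [DecidableEq α] {s t : α} (hst : Disjoint s t) (hs : s ≠ ⊥)
    (ht : t ≠ ⊥) : Finset.Iio s ∩ Finset.Iio t = {⊥} := by
  ext e
  simp only [Finset.mem_inter, Finset.mem_Iio, Finset.mem_singleton]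
  refine ⟨fun he => le_bot_iff.mp (hst he.1.le he.2.le), ?_⟩
  rintro rfl
  exact ⟨bot_lt_iff_ne_bot.mpr hs, bot_lt_iff_ne_bot.mpr ht⟩

namespace MvPolynomial

variable {σ R : Type*} [CommSemiring R]

theorem monomial_equivFunOnFinite_symm [Fintype σ] (f : σ → ℕ) :
    monomial (Finsupp.equivFunOnFinite.symm f) (1 : R) = ∏ i, X i ^ f i := by
  rw [monomial_eq, C_1, one_mul, Finsupp.prod_fintype _ _ fun _ => pow_zero _]
  rfl

instance finite_restrictSupport (s : Finset (σ →₀ ℕ)) :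
    Module.Finite R (restrictSupport R (s : Set (σ →₀ ℕ))) :=
  Module.Finite.of_basis (basisRestrictSupport R _)

theorem finrank_restrictSupport [StrongRankCondition R] (s : Finset (σ →₀ ℕ)) :
    Module.finrank R (restrictSupport R (s : Set (σ →₀ ℕ))) = s.card := by
  simp [Module.finrank_eq_card_basis (basisRestrictSupport R _)]

theorem monomial_add_monomial_notMem_restrictSupport [Nontrivial R] [DecidableEq σ]
    {s t : σ →₀ ℕ} (hst : Disjoint s t) (hs : s ≠ 0) :
    monomial s (1 : R) + monomial t 1 ∉ restrictSupport R ↑(Finset.Iio s ∪ Finset.Iio t) := by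
  have hts : t ≠ s := fun h => hs (le_bot_iff.mp (hst le_rfl (h ▸ le_rfl)))
  have hmem : s ∈ (monomial s (1 : R) + monomial t 1).support := by
    simp [mem_support_iff, coeff_monomial, hts]
  intro h
  have := (mem_restrictSupport_iff R).mp h hmem
  simp only [Finset.coe_union, Finset.coe_Iio, Set.mem_union, Set.mem_Iio, lt_irrefl,
    false_or] at this
  exact hs (le_bot_iff.mp (hst le_rfl this.le))

end MvPolynomial

section Derivatives

variable {σ : Type*}

lemma pderiv_pow_monomial (i : σ) (k : ℕ) (s : σ →₀ ℕ) (c : ℂ) :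
    (((pderiv i).toLinearMap : Module.End ℂ (MvPolynomial σ ℂ)) ^ k) (monomial s c) =
      monomial (s - Finsupp.single i k) (c * (s i).descFactorial k) := by
  induction k with
  | zero => simp
  | succ k ih =>
    rw [pow_succ', Module.End.mul_apply, ih, Derivation.coeFn_coe, pderiv_monomial, tsub_tsub,
      ← Finsupp.single_add, Finsupp.tsub_apply, Finsupp.single_eq_same, Nat.descFactorial_succ,
      Nat.cast_mul, mul_assoc, mul_comm ((s i).descFactorial k : ℂ)]

lemma list_sum_single_apply_of_notMem (m : σ →₀ ℕ) {l : List σ} {i : σ} (hi : i ∉ l) :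
    (l.map fun j => Finsupp.single j (m j)).sum i = 0 := by
  rw [← Finsupp.applyAddHom_apply, map_list_sum, List.map_map]
  refine List.sum_eq_zero fun x hx => ?_
  obtain ⟨j, hj, rfl⟩ := List.mem_map.mp hx
  exact Finsupp.single_eq_of_ne' (by rintro rfl; exact hi hj)

lemma list_prod_pderiv_pow_monomial (m : σ →₀ ℕ) {l : List σ} (hl : l.Nodup) (s : σ →₀ ℕ)
    (c : ℂ) :
    (l.map fun i => ((pderiv i).toLinearMap : Module.End ℂ (MvPolynomial σ ℂ)) ^ m i).prod
        (monomial s c) =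
      monomial (s - (l.map fun i => Finsupp.single i (m i)).sum)
        (c * (l.map fun i => ((s i).descFactorial (m i) : ℂ)).prod) := by
  induction l with
  | nil => simp
  | cons i l ih =>
    obtain ⟨hi, hl⟩ := List.nodup_cons.mp hl
    have hsi : (s - (l.map fun j => Finsupp.single j (m j)).sum) i = s i := by
      rw [Finsupp.tsub_apply, list_sum_single_apply_of_notMem m hi, Nat.sub_zero]
    rw [List.map_cons, List.prod_cons, Module.End.mul_apply, ih hl, pderiv_pow_monomial, hsi]
    simp only [List.map_cons, List.sum_cons, List.prod_cons, tsub_tsub, add_comm, mul_assoc,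
      mul_comm ((s i).descFactorial (m i) : ℂ)]

variable [Fintype σ]

lemma mderiv_zero : mderiv (0 : σ →₀ ℕ) = 1 :=
  List.prod_eq_one fun _ hf => by
    obtain ⟨i, -, rfl⟩ := List.mem_map.mp hf
    simp

lemma mderiv_monomial (m s : σ →₀ ℕ) (c : ℂ) :
    mderiv m (monomial s c) = monomial (s - m) (c * ∏ i, ((s i).descFactorial (m i) : ℂ)) := by
  rw [mderiv, list_prod_pderiv_pow_monomial m Finset.univ.nodup_toList, Finset.sum_map_toList,
    Finset.prod_map_toList, Finsupp.univ_sum_single]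

lemma prod_descFactorial_eq_zero_iff {m s : σ →₀ ℕ} :
    ∏ i, ((s i).descFactorial (m i) : ℂ) = 0 ↔ ¬ m ≤ s := by
  simp [Finset.prod_eq_zero_iff, Nat.descFactorial_eq_zero_iff_lt, Finsupp.le_def]

lemma mderiv_monomial_of_not_le {m s : σ →₀ ℕ} (h : ¬ m ≤ s) (c : ℂ) :
    mderiv m (monomial s c) = 0 := by
  rw [mderiv_monomial, prod_descFactorial_eq_zero_iff.mpr h, mul_zero, monomial_zero]

lemma monomial_mem_span_mderiv_tsub {e s : σ →₀ ℕ} (he : e ≤ s) :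
    monomial e 1 ∈ ℂ ∙ mderiv (s - e) (monomial s (1 : ℂ)) := by
  have hc : ∏ i, ((s i).descFactorial ((s - e) i) : ℂ) ≠ 0 :=
    prod_descFactorial_eq_zero_iff.not.mpr (not_not.mpr tsub_le_self)
  refine Submodule.mem_span_singleton.mpr ⟨(∏ i, ((s i).descFactorial ((s - e) i) : ℂ))⁻¹, ?_⟩
  rw [mderiv_monomial, tsub_tsub_cancel_of_le he, one_mul, smul_monomial, smul_eq_mul,
    inv_mul_cancel₀ hc]

end Derivatives

section DerivSpan

variable {σ : Type*} [Fintype σ]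

def contractₗ (F : MvPolynomial σ ℂ) : MvPolynomial σ ℂ →ₗ[ℂ] MvPolynomial σ ℂ where
  toFun g := contract g F
  map_add' g h := contract_add g h F
  map_smul' c g := contract_smul c g F

def derivSpan (F : MvPolynomial σ ℂ) : Submodule ℂ (MvPolynomial σ ℂ) :=
  Submodule.span ℂ (Set.range fun m => mderiv m F)

lemma mderiv_mem_derivSpan (m : σ →₀ ℕ) (F : MvPolynomial σ ℂ) : mderiv m F ∈ derivSpan F :=
  Submodule.subset_span ⟨m, rfl⟩

lemma range_contractₗ (F : MvPolynomial σ ℂ) : LinearMap.range (contractₗ F) = derivSpan F := by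
  classical
  refine le_antisymm ?_ (Submodule.span_le.mpr ?_)
  · rintro _ ⟨g, rfl⟩
    exact Submodule.sum_mem _ fun m _ => Submodule.smul_mem _ _ (mderiv_mem_derivSpan m F)
  · rintro _ ⟨m, rfl⟩
    refine ⟨monomial m 1, ?_⟩
    simp [contractₗ, contract, support_monomial]

lemma finrank_quotient_perp (F : MvPolynomial σ ℂ) :
    Module.finrank ℂ (MvPolynomial σ ℂ ⧸ perp F) = Module.finrank ℂ (derivSpan F) := by
  rw [← range_contractₗ]
  exact (contractₗ F).quotKerEquivRange.finrank_eq

lemma monomial_mem_derivSpan_add_monomial {s t e : σ →₀ ℕ} (hst : Disjoint s t) (he : e < s) :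
    monomial e 1 ∈ derivSpan (monomial s (1 : ℂ) + monomial t 1) := by
  have hm : s - e ≠ 0 := fun h => he.not_ge (tsub_eq_zero_iff_le.mp h)
  have hmt : ¬ s - e ≤ t := fun h => hm (le_bot_iff.mp (hst tsub_le_self h))
  have hF : mderiv (s - e) (monomial s (1 : ℂ) + monomial t 1) =
      mderiv (s - e) (monomial s 1) := by
    rw [map_add, mderiv_monomial_of_not_le hmt, add_zero]
  exact Submodule.span_singleton_le_iff_mem _ _ |>.mpr (hF ▸ mderiv_mem_derivSpan _ _)
    (monomial_mem_span_mderiv_tsub he.le)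

variable [DecidableEq σ]

lemma mderiv_monomial_mem_restrictSupport_Iic (m s : σ →₀ ℕ) (c : ℂ) :
    mderiv m (monomial s c) ∈ restrictSupport ℂ (Finset.Iic s : Set (σ →₀ ℕ)) := by
  rw [mderiv_monomial, monomial_mem_restrictSupport]
  exact Or.inl (Finset.mem_Iic.mpr tsub_le_self)

lemma mderiv_monomial_mem_restrictSupport_Iio {m : σ →₀ ℕ} (hm : m ≠ 0) (s : σ →₀ ℕ) (c : ℂ) :
    mderiv m (monomial s c) ∈ restrictSupport ℂ (Finset.Iio s : Set (σ →₀ ℕ)) := by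
  rw [mderiv_monomial, monomial_mem_restrictSupport, Finset.coe_Iio, Set.mem_Iio]
  by_cases hms : m ≤ s
  · refine Or.inl (tsub_le_self.lt_of_ne fun h => hm ?_)
    rw [← tsub_tsub_cancel_of_le hms, h, tsub_self]
  · exact Or.inr (mul_eq_zero_of_right c (prod_descFactorial_eq_zero_iff.mpr hms))

lemma derivSpan_monomial (s : σ →₀ ℕ) :
    derivSpan (monomial s (1 : ℂ)) = restrictSupport ℂ (Finset.Iic s : Set (σ →₀ ℕ)) := by
  refine le_antisymm (Submodule.span_le.mpr (Set.range_subset_iff.mpr fun m => ?_)) ?_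
  · exact mderiv_monomial_mem_restrictSupport_Iic m s 1
  · rw [restrictSupport_eq_span, Submodule.span_le]
    rintro _ ⟨e, he, rfl⟩
    exact Submodule.span_singleton_le_iff_mem _ _ |>.mpr (mderiv_mem_derivSpan _ _)
      (monomial_mem_span_mderiv_tsub (Finset.mem_Iic.mp he))

lemma derivSpan_monomial_add_monomial {s t : σ →₀ ℕ} (hst : Disjoint s t) :
    derivSpan (monomial s (1 : ℂ) + monomial t 1) =
      restrictSupport ℂ ↑(Finset.Iio s ∪ Finset.Iio t) ⊔
        ℂ ∙ (monomial s 1 + monomial t 1) := by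
  refine le_antisymm (Submodule.span_le.mpr (Set.range_subset_iff.mpr fun m => ?_)) (sup_le ?_ ?_)
  · rcases eq_or_ne m 0 with rfl | hm
    · rw [mderiv_zero, Module.End.one_apply]
      exact Submodule.mem_sup_right (Submodule.mem_span_singleton_self _)
    · refine Submodule.mem_sup_left ?_
      rw [map_add, Finset.coe_union]
      exact add_mem
        (restrictSupport_mono ℂ Set.subset_union_left
          (mderiv_monomial_mem_restrictSupport_Iio hm _ _))
        (restrictSupport_mono ℂ Set.subset_union_right
          (mderiv_monomial_mem_restrictSupport_Iio hm _ _))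
  · rw [restrictSupport_eq_span, Submodule.span_le]
    rintro _ ⟨e, he, rfl⟩
    rcases Finset.mem_union.mp he with he | he
    · exact monomial_mem_derivSpan_add_monomial hst (Finset.mem_Iio.mp he)
    · rw [add_comm]
      exact monomial_mem_derivSpan_add_monomial hst.symm (Finset.mem_Iio.mp he)
  · simpa [mderiv_zero] using mderiv_mem_derivSpan 0 (monomial s (1 : ℂ) + monomial t 1)

end DerivSpan

section Finrank

variable {σ : Type*} [Fintype σ] [DecidableEq σ]

lemma finrank_derivSpan_monomial (s : σ →₀ ℕ) :
    Module.finrank ℂ (derivSpan (monomial s (1 : ℂ))) = (Finset.Iic s).card := by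
  rw [derivSpan_monomial, finrank_restrictSupport]

lemma finrank_derivSpan_monomial_add_monomial {s t : σ →₀ ℕ} (hst : Disjoint s t) (hs : s ≠ 0)
    (ht : t ≠ 0) :
    Module.finrank ℂ (derivSpan (monomial s (1 : ℂ) + monomial t 1)) =
      (Finset.Iic s).card + (Finset.Iic t).card - 2 := by
  rw [derivSpan_monomial_add_monomial hst,
    Submodule.finrank_sup_span_singleton_of_notMem
      (monomial_add_monomial_notMem_restrictSupport hst hs),
    finrank_restrictSupport]
  have hcard := Finset.card_union_add_card_inter (Finset.Iio s) (Finset.Iio t)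
  rw [Finset.Iio_inter_Iio_of_disjoint hst hs ht, Finset.card_singleton,
    Finset.card_Iio_eq_card_Iic_sub_one, Finset.card_Iio_eq_card_Iic_sub_one] at hcard
  have := (Finset.nonempty_Iic (a := s)).card_pos
  have := (Finset.nonempty_Iic (a := t)).card_pos
  omega

end Finrank

theorem apolar_length_of_sum_of_two_monomials_general (n m : ℕ)
    (a : Fin (n + 1) → ℕ) (b : Fin (m + 1) → ℕ)
    (ha : ∀ i, 1 ≤ a i) (hb : ∀ j, 1 ≤ b j) :
    Module.finrank ℂ (MvPolynomial (Fin (n + 1) ⊕ Fin (m + 1)) ℂ ⧸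
        perp ((∏ i, X (Sum.inl i) ^ a i) + ∏ j, X (Sum.inr j) ^ b j)) =
      Module.finrank ℂ (MvPolynomial (Fin (n + 1) ⊕ Fin (m + 1)) ℂ ⧸
        perp (∏ i, (X (Sum.inl i) : MvPolynomial (Fin (n + 1) ⊕ Fin (m + 1)) ℂ) ^ a i)) +
      Module.finrank ℂ (MvPolynomial (Fin (n + 1) ⊕ Fin (m + 1)) ℂ ⧸
        perp (∏ j, (X (Sum.inr j) : MvPolynomial (Fin (n + 1) ⊕ Fin (m + 1)) ℂ) ^ b j))
      - 2 := by
  set A := Finsupp.equivFunOnFinite.symm (Sum.elim a 0 : Fin (n + 1) ⊕ Fin (m + 1) → ℕ)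
  set B := Finsupp.equivFunOnFinite.symm (Sum.elim 0 b : Fin (n + 1) ⊕ Fin (m + 1) → ℕ)
  have hMA : ∏ i, (X (Sum.inl i) : MvPolynomial (Fin (n + 1) ⊕ Fin (m + 1)) ℂ) ^ a i =
      monomial A 1 := by
    simp [A, monomial_equivFunOnFinite_symm, Fintype.prod_sum_type]
  have hMB : ∏ j, (X (Sum.inr j) : MvPolynomial (Fin (n + 1) ⊕ Fin (m + 1)) ℂ) ^ b j =
      monomial B 1 := by
    simp [B, monomial_equivFunOnFinite_symm, Fintype.prod_sum_type]
  have hAB : Disjoint A B := by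
    rw [disjoint_iff]
    ext (i | j) <;> simp [A, B, bot_eq_zero]
  have hA : A ≠ 0 :=
    Finsupp.ne_iff.mpr ⟨Sum.inl 0, by simpa [A, Nat.one_le_iff_ne_zero] using ha 0⟩
  have hB : B ≠ 0 :=
    Finsupp.ne_iff.mpr ⟨Sum.inr 0, by simpa [B, Nat.one_le_iff_ne_zero] using hb 0⟩
  rw [hMA, hMB, finrank_quotient_perp, finrank_quotient_perp, finrank_quotient_perp,
    finrank_derivSpan_monomial_add_monomial hAB hA hB, finrank_derivSpan_monomial,
    finrank_derivSpan_monomial]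

/-- for a sum `F = M₁ + M₂` of two monomials of the same degree in
disjoint sets of variables, the lengths of the apolar algebras satisfy
`dim T/F^⊥ = dim T/M₁^⊥ + dim T/M₂^⊥ - 2`. -/
theorem apolar_length_of_sum_of_two_monomials (n m : ℕ)
    (a : Fin (n + 1) → ℕ) (b : Fin (m + 1) → ℕ)
    (ha : ∀ i, 1 ≤ a i) (hb : ∀ j, 1 ≤ b j)
    (d : ℕ) (hd : 1 ≤ d) (hda : ∑ i, a i = d) (hdb : ∑ j, b j = d) :
    Module.finrank ℂ (MvPolynomial (Fin (n + 1) ⊕ Fin (m + 1)) ℂ ⧸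
        perp ((∏ i, X (Sum.inl i) ^ a i) + ∏ j, X (Sum.inr j) ^ b j)) =
      Module.finrank ℂ (MvPolynomial (Fin (n + 1) ⊕ Fin (m + 1)) ℂ ⧸
        perp (∏ i, (X (Sum.inl i) : MvPolynomial (Fin (n + 1) ⊕ Fin (m + 1)) ℂ) ^ a i)) +
      Module.finrank ℂ (MvPolynomial (Fin (n + 1) ⊕ Fin (m + 1)) ℂ ⧸
        perp (∏ j, (X (Sum.inr j) : MvPolynomial (Fin (n + 1) ⊕ Fin (m + 1)) ℂ) ^ b j))
      - 2 :=
  apolar_length_of_sum_of_two_monomials_general n m a b ha hb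

end
end
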